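/- arXiv:2601.13946 — 7 statements merged into one kernel-verified Lean document; each statement's English description precedes it below -/
import Mathlib

section
/- Suppose (φ_n) is a sequence of measurable tests φ_n : X^n → {0,1,2} and i ∈ {0,1} is such that under an i.i.d. probability measure P, the probability P^n(φ_n = i) → 1. Define Y_{n,j} as the indicator that φ_{k_n} applied to the j-th block of k_n = ⌊log n⌋ consecutive samples equals i, for j = 0, ..., m_n − 1 with m_n = ⌊n / k_n⌋, and let ψ_n = i if (1/m_n)∑_j Y_{n,j} > 1/2. Then P^∞(ψ_n ≠ i for only finitely many n) = 1. -/
/-!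
The `m_n` blocks of `k_n = ⌊log n⌋` consecutive samples are i.i.d. with law `P^{k_n}`.
Once `P^k(φ_k ≠ i) ≤ 8⁻²`, the vote can fail only if some `⌈m/2⌉` blocks all fail, and a union
bound over these at most `2^m` sets of blocks bounds the failure probability by
`2^m 8^{-m} = 4^{-m}`. Since `m_n ≥ log₂ n + 1` eventually, this is at most `n⁻²`, which is
summable, and Borel–Cantelli concludes.
-/

open MeasureTheory Filter Topology

/-- block length -/
noncomputable def kk (n : ℕ) : ℕ := ⌊Real.log n⌋₊

/-- number of blocks -/
noncomputable def mm (n : ℕ) : ℕ := n / kk n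

open Set Finset
open scoped ENNReal NNReal

namespace MeasureTheory

theorem measure_setOf_eventually_eq_one {α : Type*} [MeasurableSpace α] {μ : Measure α}
    [IsProbabilityMeasure μ] {p : ℕ → α → Prop} {b : ℕ → ℝ≥0∞} (hb : ∑' n, b n ≠ ∞)
    (hp : ∀ᶠ n in atTop, μ {x | ¬ p n x} ≤ b n) : μ {x | ∀ᶠ n in atTop, p n x} = 1 := by
  obtain ⟨N, hN⟩ := eventually_atTop.1 hp
  set s : ℕ → Set α := fun n => if N ≤ n then {x | ¬ p n x} else ∅
  have hs : ∑' n, μ (s n) ≠ ∞ := by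
    refine ne_top_of_le_ne_top hb (ENNReal.tsum_le_tsum fun n => ?_)
    by_cases hn : N ≤ n <;> simp [s, hn, hN]
  have hae : ∀ᵐ x ∂μ, ∀ᶠ n in atTop, p n x := by
    filter_upwards [ae_eventually_notMem hs] with x hx
    filter_upwards [hx, eventually_ge_atTop N] with n hxn hn
    simpa [s, hn] using hxn
  rw [measure_congr (eventuallyEq_univ.2 hae), measure_univ]

theorem measurePreserving_pi_curry_comp {ι κ ι' X : Type*} [Fintype ι] [Fintype κ]
    [Fintype ι'] [MeasurableSpace X] (P : Measure X) [IsProbabilityMeasure P] (e : ι × κ ≃ ι') :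
    MeasurePreserving (fun (x : ι' → X) (a : ι) (b : κ) => x (e (a, b)))
      (Measure.pi fun _ => P) (Measure.pi fun _ : ι => Measure.pi fun _ : κ => P) := by
  have hcurry : MeasurePreserving (MeasurableEquiv.curry ι κ X)
      (Measure.pi fun _ => P) (Measure.pi fun _ : ι => Measure.pi fun _ : κ => P) := by
    refine ⟨(MeasurableEquiv.curry ι κ X).measurable, ?_⟩
    simpa only [Measure.infinitePi_eq_pi] using
      Measure.infinitePi_map_curry (ι := ι) (κ := κ) (X := X) fun _ _ => P
  exact hcurry.comp (measurePreserving_piCongrLeft (fun _ => P) e).symm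

end MeasureTheory

section MajorityVote

variable {ι Y : Type*} [Fintype ι] [MeasurableSpace Y] (ν : Measure Y) [IsProbabilityMeasure ν]
  (C : Set Y)

open scoped Classical in
theorem measure_pi_le_card_filter_mem_le (r : ℕ) :
    (Measure.pi fun _ : ι => ν) {y | r ≤ #{j | y j ∈ C}} ≤
      (Fintype.card ι).choose r * ν C ^ r := by
  have hcover : {y : ι → Y | r ≤ #{j | y j ∈ C}} ⊆
      ⋃ S ∈ powersetCard r (univ : Finset ι), (S : Set ι).pi fun _ => C := by
    intro y hy
    obtain ⟨S, hS, hcard⟩ := exists_subset_card_eq hy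
    exact mem_iUnion₂.2 ⟨S, mem_powersetCard.2 ⟨subset_univ S, hcard⟩,
      fun j hj => (mem_filter.1 (hS hj)).2⟩
  have hbox : ∀ S ∈ powersetCard r (univ : Finset ι),
      (Measure.pi fun _ : ι => ν) ((S : Set ι).pi fun _ => C) = ν C ^ r := by
    intro S hS
    rw [← pi_univ_ite, Measure.pi_pi]
    simp [apply_ite, prod_ite_mem, (mem_powersetCard.1 hS).2]
  calc _ ≤ ∑ S ∈ powersetCard r (univ : Finset ι),
        (Measure.pi fun _ : ι => ν) ((S : Set ι).pi fun _ => C) :=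
        (measure_mono hcover).trans (measure_biUnion_finset_le _ _)
    _ = _ := by
      rw [sum_congr rfl hbox, sum_const, card_powersetCard, card_univ, nsmul_eq_mul]

open scoped Classical in
theorem measure_pi_majority_mem_le (hC : ν C ≤ 8⁻¹ ^ 2) :
    (Measure.pi fun _ : ι => ν) {y | Fintype.card ι ≤ 2 * #{j | y j ∈ C}} ≤
      4⁻¹ ^ Fintype.card ι := by
  set m := Fintype.card ι
  calc _ ≤ (Measure.pi fun _ : ι => ν) {y | m - m / 2 ≤ #{j | y j ∈ C}} :=
        measure_mono fun y (hy : m ≤ _) => (by omega : m - m / 2 ≤ _)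
    _ ≤ m.choose (m - m / 2) * ν C ^ (m - m / 2) := measure_pi_le_card_filter_mem_le ν C _
    _ ≤ 2 ^ m * 8⁻¹ ^ m := by
      refine mul_le_mul' (by exact_mod_cast Nat.choose_le_two_pow m _) ?_
      calc ν C ^ (m - m / 2) ≤ (8⁻¹ ^ 2) ^ (m - m / 2) := by gcongr
        _ = 8⁻¹ ^ (2 * (m - m / 2)) := by rw [pow_mul]
        _ ≤ 8⁻¹ ^ m := pow_le_pow_right_of_le_one' (by norm_num) (by omega)
    _ = 4⁻¹ ^ m := by
      rw [← mul_pow, show (8 : ℝ≥0∞) = 2 * 4 by norm_num, ENNReal.mul_inv (by simp) (by simp),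
        ← mul_assoc, ENNReal.mul_inv_cancel (by simp) (by simp), one_mul]

end MajorityVote

theorem not_half_lt_inv_card_mul_sum_ite_iff {ι : Type*} [Fintype ι] (p : ι → Prop)
    [DecidablePred p] :
    ¬ (1 / 2 : ℝ) < (Fintype.card ι : ℝ)⁻¹ * ∑ j, (if p j then 1 else 0) ↔
      Fintype.card ι ≤ 2 * #{j | ¬ p j} := by
  have hsplit : #{j | p j} + #{j | ¬ p j} = Fintype.card ι :=
    card_filter_add_card_filter_not (fun j => p j)
  rw [sum_boole, not_lt]
  rcases (Fintype.card ι).eq_zero_or_pos with h | h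
  · simp [h]
  · rw [inv_mul_le_iff₀ (by exact_mod_cast h)]
    have hcast : ((#{j | p j} : ℕ) : ℝ) ≤ Fintype.card ι * (1 / 2) ↔
        2 * #{j | p j} ≤ Fintype.card ι := by
      rw [← Nat.cast_le (α := ℝ)]
      push_cast
      constructor <;> intro <;> linarith
    rw [hcast]
    omega

section Blocks

variable {X : Type*} [MeasurableSpace X] {P : Measure X} [IsProbabilityMeasure P]
  {μ : Measure (ℕ → X)}

theorem map_blocks_eq_pi
    (hproj : ∀ n : ℕ, μ.map (fun ω (j : Fin n) => ω j) = Measure.pi fun _ => P) (m k : ℕ) :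
    μ.map (fun ω (j : Fin m) (t : Fin k) => ω (k * j + t)) =
      Measure.pi fun _ : Fin m => Measure.pi fun _ : Fin k => P := by
  have hblocks := measurePreserving_pi_curry_comp P (finProdFinEquiv : Fin m × Fin k ≃ Fin (m * k))
  rw [← hblocks.map_eq, ← hproj (m * k), Measure.map_map hblocks.measurable (by fun_prop)]
  congr with ω j t
  simp [finProdFinEquiv, add_comm]

theorem measure_not_majority_blocks_le {β : Type*} [DecidableEq β]
    (hproj : ∀ n : ℕ, μ.map (fun ω (j : Fin n) => ω j) = Measure.pi fun _ => P) {k : ℕ}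
    (f : (Fin k → X) → β) (i : β) (hq : (Measure.pi fun _ => P) {x | f x ≠ i} ≤ 8⁻¹ ^ 2)
    (m : ℕ) :
    μ {ω | ¬ (1 / 2 : ℝ) < (m : ℝ)⁻¹ *
        ∑ j ∈ range m, (if f (fun t : Fin k => ω (k * j + t)) = i then 1 else 0)} ≤
      4⁻¹ ^ m := by
  classical
  have hfail : {ω : ℕ → X | ¬ (1 / 2 : ℝ) < (m : ℝ)⁻¹ *
        ∑ j ∈ range m, (if f (fun t : Fin k => ω (k * j + t)) = i then 1 else 0)} =
      (fun ω (j : Fin m) (t : Fin k) => ω (k * j + t)) ⁻¹'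
        {y | m ≤ 2 * #{j | y j ∈ {x | f x ≠ i}}} := by
    ext ω
    have := not_half_lt_inv_card_mul_sum_ite_iff fun j : Fin m => f (fun t => ω (k * j + t)) = i
    rwa [Fintype.card_fin, Fin.sum_univ_eq_sum_range
      (fun j => if f (fun t : Fin k => ω (k * j + t)) = i then (1 : ℝ) else 0)] at this
  have hblocks : Measurable fun (ω : ℕ → X) (j : Fin m) (t : Fin k) => ω (k * j + t) :=
    measurable_pi_lambda _ fun _ => measurable_pi_lambda _ fun _ => measurable_pi_apply _
  calc _ ≤ μ.map (fun ω (j : Fin m) (t : Fin k) => ω (k * j + t))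
        {y | m ≤ 2 * #{j | y j ∈ {x | f x ≠ i}}} :=
        hfail ▸ Measure.le_map_apply hblocks.aemeasurable _
    _ ≤ 4⁻¹ ^ m := by
      simpa [map_blocks_eq_pi hproj] using
        measure_pi_majority_mem_le (ι := Fin m) _ {x | f x ≠ i} hq

end Blocks

theorem kk_le_log_two (n : ℕ) : kk n ≤ Nat.log 2 n := by
  rcases n.eq_zero_or_pos with rfl | hn
  · simp [kk]
  rw [kk, ← Nat.lt_succ_iff, Nat.floor_lt (Real.log_natCast_nonneg n),
    Real.log_lt_iff_lt_exp (by exact_mod_cast hn)]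
  calc (n : ℝ) < 2 ^ (Nat.log 2 n + 1) := by
        exact_mod_cast Nat.lt_pow_succ_log_self one_lt_two n
    _ ≤ Real.exp 1 ^ (Nat.log 2 n + 1) := by
      gcongr
      linarith [Real.add_one_le_exp 1]
    _ = Real.exp (Nat.log 2 n + 1 : ℕ) := by rw [← Real.exp_nat_mul, mul_one]

theorem mul_succ_le_two_pow {L : ℕ} (hL : 5 ≤ L) : L * (L + 1) ≤ 2 ^ L := by
  induction L, hL using Nat.le_induction with
  | base => norm_num
  | succ L hL ih =>
    calc (L + 1) * (L + 1 + 1) ≤ 2 * (L * (L + 1)) := by nlinarith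
      _ ≤ 2 ^ (L + 1) := by rw [pow_succ]; omega

theorem tendsto_kk_atTop : Tendsto kk atTop atTop :=
  tendsto_nat_floor_atTop.comp (Real.tendsto_log_atTop.comp tendsto_natCast_atTop_atTop)

theorem eventually_lt_two_pow_mm : ∀ᶠ n in atTop, n < 2 ^ mm n := by
  filter_upwards [eventually_ge_atTop 32, tendsto_kk_atTop.eventually_ge_atTop 1] with n hn hk
  set L := Nat.log 2 n
  have hL : 5 ≤ L := Nat.le_log_of_pow_le one_lt_two hn
  have hLm : L + 1 ≤ mm n := by
    rw [mm, Nat.le_div_iff_mul_le hk]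
    calc (L + 1) * kk n ≤ (L + 1) * L := Nat.mul_le_mul_left _ (kk_le_log_two n)
      _ ≤ 2 ^ L := by rw [mul_comm]; exact mul_succ_le_two_pow hL
      _ ≤ n := Nat.pow_log_le_self 2 (by omega)
  exact (Nat.lt_pow_succ_log_self one_lt_two n).trans_le (Nat.pow_le_pow_right two_pos hLm)

theorem eventually_four_inv_pow_mm_le :
    ∀ᶠ n in atTop, (4 : ℝ≥0∞)⁻¹ ^ mm n ≤ ((((n : ℝ≥0) ^ 2)⁻¹ : ℝ≥0) : ℝ≥0∞) := by
  filter_upwards [eventually_lt_two_pow_mm, eventually_ge_atTop 1] with n hn h1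
  rw [ENNReal.coe_inv (by positivity), ← ENNReal.inv_pow, ENNReal.inv_le_inv,
    show (4 : ℝ≥0∞) = 2 ^ 2 by norm_num, ← pow_mul, mul_comm, pow_mul]
  push_cast
  gcongr
  exact_mod_cast hn.le

theorem tsum_coe_inv_sq_ne_top : ∑' n : ℕ, ((((n : ℝ≥0) ^ 2)⁻¹ : ℝ≥0) : ℝ≥0∞) ≠ ∞ := by
  rw [ENNReal.tsum_coe_ne_top_iff_summable]
  simpa using NNReal.summable_rpow_inv.2 one_lt_two

theorem stmt_3_general {X : Type*} [MeasurableSpace X]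
    (P : Measure X) [IsProbabilityMeasure P]
    (μ : Measure (ℕ → X)) [IsProbabilityMeasure μ]
    (hproj : ∀ n : ℕ, Measure.map (fun ω (j : Fin n) => ω (j : ℕ)) μ =
      Measure.pi fun _ : Fin n => P)
    (φ : ∀ n : ℕ, (Fin n → X) → ℕ) (hφ : ∀ n, Measurable (φ n))
    (i : ℕ)
    (hcons : Tendsto (fun n => (Measure.pi fun _ : Fin n => P) {x | φ n x = i})
      atTop (𝓝 1)) :
    μ {ω | ∀ᶠ n in atTop,
        (1 / 2 : ℝ) <
          ((mm n : ℕ) : ℝ)⁻¹ *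
            ∑ j ∈ Finset.range (mm n),
              (if φ (kk n)
                  (fun t : Fin (kk n) => ω (kk n * j + (t : ℕ))) = i
                then (1 : ℝ) else 0)} = 1 := by
  have hblock_fail : Tendsto (fun k => (Measure.pi fun _ : Fin k => P) {x | φ k x ≠ i})
      atTop (𝓝 0) := by
    have hcompl : ∀ k, (Measure.pi fun _ : Fin k => P) {x | φ k x ≠ i} =
        1 - (Measure.pi fun _ : Fin k => P) {x | φ k x = i} :=
      fun k => prob_compl_eq_one_sub (hφ k (measurableSet_singleton i))
    simpa [hcompl] using
      ENNReal.Tendsto.sub tendsto_const_nhds hcons (Or.inl ENNReal.one_ne_top)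
  have hblock : ∀ᶠ n in atTop,
      (Measure.pi fun _ : Fin (kk n) => P) {x | φ (kk n) x ≠ i} ≤ 8⁻¹ ^ 2 :=
    tendsto_kk_atTop.eventually (hblock_fail.eventually (ge_mem_nhds (by simp [pos_iff_ne_zero])))
  refine measure_setOf_eventually_eq_one tsum_coe_inv_sq_ne_top ?_
  filter_upwards [hblock, eventually_four_inv_pow_mm_le] with n hq hn
  exact (measure_not_majority_blocks_le hproj (φ (kk n)) i hq (mm n)).trans hn

/-- Block majority vote: if `P^n(φ_n = i) → 1`, then with `k_n = ⌊log n⌋`,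
`m_n = ⌊n / k_n⌋` and `Y_{n,j}` the indicator that `φ_{k_n}` applied to the `j`-th
block of `k_n` consecutive samples equals `i`, almost surely under the i.i.d. law `μ`
the majority vote succeeds (i.e. `(1/m_n) ∑_j Y_{n,j} > 1/2`, so `ψ_n = i`) for all
but finitely many `n`. -/
theorem stmt_3 {X : Type*} [MetricSpace X] [TopologicalSpace.SeparableSpace X]
    [MeasurableSpace X] [BorelSpace X]
    (P : Measure X) [IsProbabilityMeasure P]
    (μ : Measure (ℕ → X)) [IsProbabilityMeasure μ]
    (hproj : ∀ n : ℕ, Measure.map (fun ω (j : Fin n) => ω (j : ℕ)) μ =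
      Measure.pi fun _ : Fin n => P)
    (φ : ∀ n : ℕ, (Fin n → X) → ℕ) (hφ : ∀ n, Measurable (φ n))
    (i : ℕ) (hi : i ≤ 1)
    (hcons : Tendsto (fun n => (Measure.pi fun _ : Fin n => P) {x | φ n x = i})
      atTop (𝓝 1)) :
    μ {ω | ∀ᶠ n in atTop,
        (1 / 2 : ℝ) <
          ((mm n : ℕ) : ℝ)⁻¹ *
            ∑ j ∈ Finset.range (mm n),
              (if φ (kk n)
                  (fun t : Fin (kk n) => ω (kk n * j + (t : ℕ))) = i
                then (1 : ℝ) else 0)} = 1 :=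
  stmt_3_general P μ hproj φ hφ i hcons
end

section
/- If for a pair of disjoint hypotheses H_0, H_1 ⊆ P(X) there exists a weakly consistent FP-test (a sequence of measurable tests φ_n : X^n → {0,1,2} with open decision regions such that P^n(φ_n = i) → 1 for all P ∈ H_i, i = 0,1), then there also exists a strongly consistent FP-test, i.e. one with P^∞(φ_n ≠ i for all but finitely many n) = 1 for all P ∈ H_i. -/
/-!
Split the first `n` observations into `s = ⌊√n⌋` disjoint blocks of length `s`, apply the
weakly consistent test `φ_s` to each block, and let `ψ_n` accept `i ∈ {0, 1}` when a strict
majority of the blocks votes `i` (and return `2`, no decision, otherwise). Acceptance regions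
stay open, being finite unions of finite intersections of preimages of open sets under
continuous projections. Under `P ∈ H_i`, once the error `ε` of `φ_s` is below `1/16`, `ψ_n`
can only err if at least half of the `s` independent blocks err, which by a union bound over
the `2^s` sets of blocks has probability at most `2^s ε^(s/2) ≤ 2^(-s)`. Since
`∑ₙ 2^(-⌊√n⌋) < ∞`, Borel–Cantelli shows that almost surely `ψ_n = i` for all large `n`.
-/

open MeasureTheory Filter Topology Finset
open scoped ENNReal NNReal

namespace BlockMajority

section Reindex

variable {X : Type*} [MeasurableSpace X]

theorem pi_map_comp_of_injective {ι κ : Type*} [Fintype ι] [Fintype κ] (μ : ι → Measure X)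
    [∀ i, IsProbabilityMeasure (μ i)] {f : κ → ι} (hf : f.Injective) :
    (Measure.pi μ).map (fun x => x ∘ f) = Measure.pi fun k => μ (f k) := by
  let e := Equiv.ofInjective f hf
  have hcomp : (fun x : ι → X => x ∘ f) =
      (MeasurableEquiv.piCongrLeft (fun _ => X) e).symm ∘ (Set.range f).domRestrict := by
    ext x k
    simp [e, MeasurableEquiv.piCongrLeft, Equiv.piCongrLeft]
  rw [← Measure.infinitePi_eq_pi, ← Measure.infinitePi_eq_pi, hcomp,
    ← Measure.map_map (by fun_prop) (by fun_prop), Measure.infinitePi_map_restrict', eq_comm,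
    ← MeasurableEquiv.map_apply_eq_iff_map_symm_apply_eq]
  exact Measure.infinitePi_map_piCongrLeft (fun i : Set.range f => μ i) e

theorem pi_map_curry {ι κ : Type*} [Fintype ι] [Fintype κ] (P : Measure X)
    [IsProbabilityMeasure P] :
    (Measure.pi fun _ : ι × κ => P).map Function.curry =
      Measure.pi fun _ : ι => Measure.pi fun _ : κ => P := by
  simp_rw [← Measure.infinitePi_eq_pi]
  exact Measure.infinitePi_map_curry fun _ _ => P

end Reindex

section Counting

variable {ι α : Type*} [Fintype ι] (p : α → Prop) [DecidablePred p]

theorem setOf_le_card_filter_eq_biUnion (k : ℕ) :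
    {y : ι → α | k ≤ #{b | p (y b)}} =
      ⋃ T ∈ ({T | k ≤ #T} : Finset (Finset ι)), (T : Set ι).pi fun _ => {a | p a} := by
  ext y
  simp only [Set.mem_ofPred_eq, Set.mem_iUnion, Set.mem_pi, Finset.mem_coe, mem_filter,
    mem_univ, true_and, exists_prop]
  constructor
  · exact fun hy => ⟨({b | p (y b)} : Finset ι), hy, fun b hb => (mem_filter.1 hb).2⟩
  · rintro ⟨T, hT, hTy⟩
    exact hT.trans (card_le_card fun b hb => mem_filter.2 ⟨mem_univ b, hTy b hb⟩)

theorem isOpen_setOf_le_card_filter [TopologicalSpace α] (hp : IsOpen {a | p a}) (k : ℕ) :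
    IsOpen {y : ι → α | k ≤ #{b | p (y b)}} := by
  rw [setOf_le_card_filter_eq_biUnion]
  exact isOpen_biUnion fun T _ => isOpen_set_pi T.finite_toSet fun _ _ => hp

theorem pi_setOf_le_card_filter_le [MeasurableSpace α] (μ : Measure α) [IsProbabilityMeasure μ]
    (k : ℕ) :
    (Measure.pi fun _ : ι => μ) {y | k ≤ #{b | p (y b)}} ≤
      2 ^ Fintype.card ι * μ {a | p a} ^ k := by
  classical
  have hbox : ∀ T : Finset ι, k ≤ #T →
      (Measure.pi fun _ : ι => μ) ((T : Set ι).pi fun _ => {a | p a}) ≤ μ {a | p a} ^ k := by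
    intro T hT
    have hpi : ((T : Set ι).pi fun _ => {a | p a}) =
        Set.univ.pi fun b => if b ∈ T then {a | p a} else Set.univ := by
      ext y
      simp only [Set.mem_pi, Set.mem_univ, true_implies, Finset.mem_coe]
      exact forall_congr' fun b => by split_ifs with hb <;> simp [hb]
    rw [hpi, Measure.pi_pi]
    simp only [apply_ite, measure_univ, prod_ite_mem, univ_inter, prod_const]
    exact pow_le_pow_right_of_le_one' prob_le_one hT
  calc (Measure.pi fun _ : ι => μ) {y | k ≤ #{b | p (y b)}}
      ≤ ∑ T ∈ ({T | k ≤ #T} : Finset (Finset ι)),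
          (Measure.pi fun _ : ι => μ) ((T : Set ι).pi fun _ => {a | p a}) := by
        rw [setOf_le_card_filter_eq_biUnion]
        exact measure_biUnion_finset_le _ _
    _ ≤ ∑ _T ∈ ({T | k ≤ #T} : Finset (Finset ι)), μ {a | p a} ^ k :=
        sum_le_sum fun T hT => hbox T (mem_filter.1 hT).2
    _ ≤ 2 ^ Fintype.card ι * μ {a | p a} ^ k := by
        rw [sum_const, nsmul_eq_mul]
        gcongr
        calc (#({T | k ≤ #T} : Finset (Finset ι)) : ℝ≥0∞)
            ≤ #(univ : Finset (Finset ι)) := by exact_mod_cast card_filter_le _ _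
          _ = 2 ^ Fintype.card ι := by simp

end Counting

section Majority

variable {ι : Type*} [Fintype ι]

def majority (v : ι → ℕ) : ℕ :=
  if Fintype.card ι < 2 * #{b | v b = 0} then 0
  else if Fintype.card ι < 2 * #{b | v b = 1} then 1 else 2

theorem majority_le_two (v : ι → ℕ) : majority v ≤ 2 := by
  unfold majority
  split_ifs <;> omega

theorem card_filter_eq_add_card_filter_eq_le (v : ι → ℕ) {i j : ℕ} (hij : i ≠ j) :
    #{b | v b = i} + #{b | v b = j} ≤ Fintype.card ι := by
  classical
  rw [← card_union_of_disjoint (disjoint_filter.2 fun b _ hi hj => hij (hi.symm.trans hj))]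
  exact card_le_univ _

theorem majority_eq_iff (v : ι → ℕ) {i : ℕ} (hi : i ≤ 1) :
    majority v = i ↔ Fintype.card ι < 2 * #{b | v b = i} := by
  have := card_filter_eq_add_card_filter_eq_le v zero_ne_one
  unfold majority
  interval_cases i <;> split_ifs <;>
    simp only [true_iff, false_iff, not_lt, OfNat.ofNat_ne_one] <;> omega

theorem card_le_two_mul_card_filter_ne_of_majority_ne (v : ι → ℕ) {i : ℕ} (hi : i ≤ 1)
    (h : majority v ≠ i) : Fintype.card ι ≤ 2 * #{b | v b ≠ i} := by
  have hsplit := card_filter_add_card_filter_not (s := univ) fun b => v b = i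
  simp only [card_univ] at hsplit
  simp only [ne_eq]
  have := (majority_eq_iff v hi).not.1 h
  omega

end Majority

theorem summable_inv_two_pow_sqrt : Summable fun n : ℕ => (2⁻¹ : ℝ) ^ n.sqrt := by
  obtain ⟨M, hM⟩ := (tendsto_pow_const_mul_const_pow_of_abs_lt_one 4
    (by norm_num : |(2⁻¹ : ℝ)| < 1)).bddAbove_range
  refine .of_norm_bounded_eventually_nat
    ((Real.summable_one_div_nat_pow.2 one_lt_two).mul_left (2 * M)) ?_
  filter_upwards [eventually_ge_atTop 1] with n hn
  set s := n.sqrt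
  have hn2 : (n : ℝ) ^ 2 ≤ ((s + 1 : ℕ) : ℝ) ^ 4 := by
    have : n ≤ (s + 1) ^ 2 := by nlinarith [Nat.lt_succ_sqrt n]
    exact_mod_cast (Nat.pow_le_pow_left this 2).trans_eq (by ring)
  have hpos : (0 : ℝ) < n := by exact_mod_cast hn
  rw [Real.norm_of_nonneg (by positivity), mul_one_div, le_div_iff₀ (by positivity)]
  calc (2⁻¹ : ℝ) ^ s * n ^ 2 ≤ 2⁻¹ ^ s * ((s + 1 : ℕ) : ℝ) ^ 4 := by gcongr
    _ = 2 * (((s + 1 : ℕ) : ℝ) ^ 4 * 2⁻¹ ^ (s + 1)) := by ring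
    _ ≤ 2 * M := by gcongr; exact hM ⟨s + 1, rfl⟩

theorem tsum_inv_two_pow_sqrt_ne_top : ∑' n : ℕ, (2⁻¹ : ℝ≥0∞) ^ n.sqrt ≠ ∞ := by
  have : Summable fun n : ℕ => (2⁻¹ : ℝ≥0) ^ n.sqrt :=
    NNReal.summable_coe.1 (by push_cast; exact summable_inv_two_pow_sqrt)
  have := ENNReal.tsum_coe_ne_top_iff_summable.2 this
  push_cast at this
  exact this

theorem tsum_ne_top_of_eventually_le {f g : ℕ → ℝ≥0∞} (hf : ∀ n, f n ≠ ∞)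
    (hfg : ∀ᶠ n in atTop, f n ≤ g n) (hg : ∑' n, g n ≠ ∞) : ∑' n, f n ≠ ∞ := by
  obtain ⟨N, hN⟩ := eventually_atTop.1 hfg
  rw [← ENNReal.summable.sum_add_tsum_nat_add' (k := N)]
  refine ENNReal.add_ne_top.2
    ⟨ENNReal.sum_ne_top.2 fun n _ => hf n, ne_top_of_le_ne_top hg ?_⟩
  calc ∑' n, f (n + N) ≤ ∑' n, g (n + N) := ENNReal.tsum_le_tsum fun n => hN _ (by omega)
    _ ≤ ∑' n, g n := ENNReal.tsum_comp_le_tsum_of_injective (add_left_injective N) g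

theorem two_pow_mul_inv_sixteen_pow_le (s : ℕ) :
    (2 : ℝ≥0∞) ^ s * 16⁻¹ ^ (s - s / 2) ≤ 2⁻¹ ^ s := by
  have h16 : (16⁻¹ : ℝ≥0∞) = 4⁻¹ ^ 2 := by rw [← ENNReal.inv_pow]; norm_num
  have h4 : (2 : ℝ≥0∞) * 4⁻¹ = 2⁻¹ := by
    rw [show (4 : ℝ≥0∞) = 2 * 2 by norm_num, ENNReal.mul_inv (by simp) (by simp), ← mul_assoc,
      ENNReal.mul_inv_cancel (by simp) (by simp), one_mul]
  calc (2 : ℝ≥0∞) ^ s * 16⁻¹ ^ (s - s / 2) = 2 ^ s * 4⁻¹ ^ (2 * (s - s / 2)) := by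
        rw [h16, pow_mul]
    _ ≤ 2 ^ s * 4⁻¹ ^ s :=
        mul_le_mul_right (pow_le_pow_right_of_le_one' (ENNReal.inv_le_one.2 (by norm_num))
          (by omega)) _
    _ = 2⁻¹ ^ s := by rw [← mul_pow, h4]

theorem measure_setOf_eventually_eq_one {Ω : Type*} [MeasurableSpace Ω] {μ : Measure Ω}
    [IsProbabilityMeasure μ] {p : ℕ → Ω → Prop} (h : ∑' n, μ {ω | ¬ p n ω} ≠ ∞) :
    μ {ω | ∀ᶠ n in atTop, p n ω} = 1 := by
  have hae := ae_eventually_notMem h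
  simp only [Set.mem_ofPred_eq, not_not] at hae
  rw [measure_congr (eventuallyEq_univ.2 hae), measure_univ]

theorem tendsto_sqrt_atTop : Tendsto Nat.sqrt atTop atTop :=
  tendsto_atTop_atTop.2 fun b => ⟨b * b, fun _ hn => Nat.le_sqrt.2 hn⟩

section MajorityTest

variable {X : Type*}

def blocks (n : ℕ) (x : Fin n → X) : Fin n.sqrt → Fin n.sqrt → X :=
  fun b j => x (Fin.castLE (Nat.sqrt_le n) (finProdFinEquiv (b, j)))

theorem continuous_blocks [TopologicalSpace X] (n : ℕ) : Continuous (blocks (X := X) n) :=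
  continuous_pi fun _ => continuous_pi fun _ => continuous_apply _

theorem measurable_blocks [MeasurableSpace X] (n : ℕ) : Measurable (blocks (X := X) n) :=
  measurable_pi_lambda _ fun _ => measurable_pi_lambda _ fun _ => measurable_pi_apply _

theorem pi_map_blocks [MeasurableSpace X] (P : Measure X) [IsProbabilityMeasure P] (n : ℕ) :
    (Measure.pi fun _ : Fin n => P).map (blocks n) =
      Measure.pi fun _ => Measure.pi fun _ => P := by
  have hblocks : blocks (X := X) n =
      Function.curry ∘ fun x => x ∘ (Fin.castLE (Nat.sqrt_le n) ∘ finProdFinEquiv) := rfl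
  rw [hblocks, ← Measure.map_map (by fun_prop) (by fun_prop),
    pi_map_comp_of_injective _ ((Fin.castLE_injective _).comp finProdFinEquiv.injective),
    pi_map_curry]

def majorityTest (φ : ∀ n : ℕ, (Fin n → X) → ℕ) (n : ℕ) (x : Fin n → X) : ℕ :=
  majority fun b => φ n.sqrt (blocks n x b)

variable {φ : ∀ n : ℕ, (Fin n → X) → ℕ}

theorem majorityTest_le_two (n : ℕ) (x : Fin n → X) : majorityTest φ n x ≤ 2 :=
  majority_le_two _

theorem measurable_majorityTest [MeasurableSpace X] (hφ : ∀ n, Measurable (φ n)) (n : ℕ) :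
    Measurable (majorityTest φ n) :=
  (measurable_of_countable majority).comp <|
    measurable_pi_lambda _ fun b =>
      (hφ _).comp ((measurable_pi_apply b).comp (measurable_blocks n))

theorem isOpen_setOf_majorityTest_eq [TopologicalSpace X] {i : ℕ}
    (hφ : ∀ n, IsOpen {y : Fin n → X | φ n y = i}) (hi : i ≤ 1) (n : ℕ) :
    IsOpen {x : Fin n → X | majorityTest φ n x = i} := by
  have hset : {x : Fin n → X | majorityTest φ n x = i} =
      blocks n ⁻¹' {y | n.sqrt / 2 + 1 ≤ #{b | φ n.sqrt (y b) = i}} := by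
    ext x
    simp only [Set.mem_ofPred_eq, Set.mem_preimage, majorityTest, majority_eq_iff _ hi,
      Fintype.card_fin]
    omega
  rw [hset]
  exact (isOpen_setOf_le_card_filter _ (hφ _) _).preimage (continuous_blocks n)

theorem pi_majorityTest_ne_le [MeasurableSpace X] (P : Measure X) [IsProbabilityMeasure P]
    {i : ℕ} (hi : i ≤ 1) (n : ℕ) :
    (Measure.pi fun _ : Fin n => P) {x | majorityTest φ n x ≠ i} ≤
      2 ^ n.sqrt * (Measure.pi fun _ : Fin n.sqrt => P) {y | φ n.sqrt y ≠ i} ^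
        (n.sqrt - n.sqrt / 2) := by
  calc (Measure.pi fun _ : Fin n => P) {x | majorityTest φ n x ≠ i}
      ≤ (Measure.pi fun _ : Fin n => P)
          (blocks n ⁻¹' {y | n.sqrt - n.sqrt / 2 ≤ #{b | φ n.sqrt (y b) ≠ i}}) := by
        refine measure_mono fun x hx => ?_
        have := card_le_two_mul_card_filter_ne_of_majority_ne _ hi hx
        rw [Fintype.card_fin] at this
        simp only [Set.mem_preimage, Set.mem_ofPred_eq]
        omega
    _ ≤ ((Measure.pi fun _ : Fin n => P).map (blocks n))
          {y | n.sqrt - n.sqrt / 2 ≤ #{b | φ n.sqrt (y b) ≠ i}} :=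
        Measure.le_map_apply (measurable_blocks n).aemeasurable _
    _ ≤ _ := by
        rw [pi_map_blocks]
        exact (pi_setOf_le_card_filter_le (fun y => φ n.sqrt y ≠ i) _ _).trans_eq
          (by rw [Fintype.card_fin])

theorem tendsto_pi_setOf_ne [MeasurableSpace X] (hφ : ∀ n, Measurable (φ n)) {i : ℕ}
    (P : Measure X) [IsProbabilityMeasure P]
    (hP : Tendsto (fun n => (Measure.pi fun _ : Fin n => P) {x | φ n x = i}) atTop (𝓝 1)) :
    Tendsto (fun n => (Measure.pi fun _ : Fin n => P) {y | φ n y ≠ i}) atTop (𝓝 0) := by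
  have h := ENNReal.Tendsto.sub tendsto_const_nhds hP (Or.inl ENNReal.one_ne_top)
  rw [tsub_self] at h
  refine h.congr fun n => ?_
  have hmeas : MeasurableSet {y : Fin n → X | φ n y = i} := hφ n (measurableSet_singleton i)
  rw [← prob_compl_eq_one_sub hmeas]
  rfl

theorem eventually_pi_majorityTest_ne_le [MeasurableSpace X] (hφ : ∀ n, Measurable (φ n))
    {i : ℕ} (hi : i ≤ 1) (P : Measure X) [IsProbabilityMeasure P]
    (hP : Tendsto (fun n => (Measure.pi fun _ : Fin n => P) {x | φ n x = i}) atTop (𝓝 1)) :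
    ∀ᶠ n in atTop,
      (Measure.pi fun _ : Fin n => P) {x | majorityTest φ n x ≠ i} ≤ 2⁻¹ ^ n.sqrt := by
  filter_upwards [tendsto_sqrt_atTop.eventually ((tendsto_pi_setOf_ne hφ P hP).eventually
    (ge_mem_nhds (by norm_num : (0 : ℝ≥0∞) < 16⁻¹)))] with n hn
  calc (Measure.pi fun _ : Fin n => P) {x | majorityTest φ n x ≠ i}
      ≤ 2 ^ n.sqrt * (Measure.pi fun _ : Fin n.sqrt => P) {y | φ n.sqrt y ≠ i} ^
          (n.sqrt - n.sqrt / 2) := pi_majorityTest_ne_le P hi n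
    _ ≤ 2 ^ n.sqrt * 16⁻¹ ^ (n.sqrt - n.sqrt / 2) := by gcongr
    _ ≤ 2⁻¹ ^ n.sqrt := two_pow_mul_inv_sixteen_pow_le _

theorem measure_eventually_majorityTest_eq [MeasurableSpace X] (hφ : ∀ n, Measurable (φ n))
    {i : ℕ} (hi : i ≤ 1) (P : Measure X) [IsProbabilityMeasure P]
    (hP : Tendsto (fun n => (Measure.pi fun _ : Fin n => P) {x | φ n x = i}) atTop (𝓝 1))
    (μ : Measure (ℕ → X)) [IsProbabilityMeasure μ]
    (hμ : ∀ n : ℕ, μ.map (fun ω (j : Fin n) => ω j) = Measure.pi fun _ => P) :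
    μ {ω | ∀ᶠ n in atTop, majorityTest φ n (fun j : Fin n => ω j) = i} = 1 := by
  have herr : ∀ n, μ {ω | ¬ majorityTest φ n (fun j : Fin n => ω j) = i} =
      (Measure.pi fun _ : Fin n => P) {x | majorityTest φ n x ≠ i} := fun n => by
    have hmeas : MeasurableSet {x : Fin n → X | majorityTest φ n x ≠ i} :=
      (measurable_majorityTest hφ n) (measurableSet_singleton i).compl
    rw [← hμ n, Measure.map_apply (by fun_prop) hmeas]
    rfl
  refine measure_setOf_eventually_eq_one (tsum_ne_top_of_eventually_le
    (fun _ => measure_ne_top _ _) ?_ tsum_inv_two_pow_sqrt_ne_top)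
  simpa only [herr] using eventually_pi_majorityTest_ne_le hφ hi P hP

end MajorityTest

end BlockMajority

open BlockMajority in
theorem stmt_5_general {X : Type*} [MetricSpace X]
    [MeasurableSpace X]
    (H0 H1 : Set (Measure X))
    (hprob : ∀ P ∈ H0 ∪ H1, IsProbabilityMeasure P)
    (hweak : ∃ φ : ∀ n : ℕ, (Fin n → X) → ℕ,
      (∀ n, Measurable (φ n)) ∧ (∀ n x, φ n x ≤ 2) ∧
      (∀ n, IsOpen {x : Fin n → X | φ n x = 0}) ∧
      (∀ n, IsOpen {x : Fin n → X | φ n x = 1}) ∧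
      (∀ P ∈ H0, Tendsto (fun n => (Measure.pi fun _ : Fin n => P) {x | φ n x = 0})
        atTop (𝓝 1)) ∧
      (∀ P ∈ H1, Tendsto (fun n => (Measure.pi fun _ : Fin n => P) {x | φ n x = 1})
        atTop (𝓝 1))) :
    ∃ ψ : ∀ n : ℕ, (Fin n → X) → ℕ,
      (∀ n, Measurable (ψ n)) ∧ (∀ n x, ψ n x ≤ 2) ∧
      (∀ n, IsOpen {x : Fin n → X | ψ n x = 0}) ∧
      (∀ n, IsOpen {x : Fin n → X | ψ n x = 1}) ∧
      (∀ P ∈ H0, ∀ μ : Measure (ℕ → X), IsProbabilityMeasure μ →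
        (∀ n : ℕ, Measure.map (fun ω (j : Fin n) => ω (j : ℕ)) μ =
          Measure.pi fun _ : Fin n => P) →
        μ {ω | ∀ᶠ n in atTop, ψ n (fun j : Fin n => ω (j : ℕ)) = 0} = 1) ∧
      (∀ P ∈ H1, ∀ μ : Measure (ℕ → X), IsProbabilityMeasure μ →
        (∀ n : ℕ, Measure.map (fun ω (j : Fin n) => ω (j : ℕ)) μ =
          Measure.pi fun _ : Fin n => P) →
        μ {ω | ∀ᶠ n in atTop, ψ n (fun j : Fin n => ω (j : ℕ)) = 1} = 1) := by
  obtain ⟨φ, hφ, -, hφ0, hφ1, hH0, hH1⟩ := hweak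
  refine ⟨majorityTest φ, measurable_majorityTest hφ, majorityTest_le_two,
    isOpen_setOf_majorityTest_eq hφ0 zero_le_one, isOpen_setOf_majorityTest_eq hφ1 le_rfl,
    fun P hP μ _ hμ => ?_, fun P hP μ _ hμ => ?_⟩
  · have := hprob P (.inl hP)
    exact measure_eventually_majorityTest_eq hφ zero_le_one P (hH0 P hP) μ hμ
  · have := hprob P (.inr hP)
    exact measure_eventually_majorityTest_eq hφ le_rfl P (hH1 P hP) μ hμ

/-- If a pair of disjoint hypotheses admits a weakly consistent FP-test, then it admits
a strongly consistent FP-test. -/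
theorem stmt_5 {X : Type*} [MetricSpace X] [TopologicalSpace.SeparableSpace X]
    [MeasurableSpace X] [BorelSpace X]
    (H0 H1 : Set (Measure X))
    (hprob : ∀ P ∈ H0 ∪ H1, IsProbabilityMeasure P)
    (hdisj : Disjoint H0 H1)
    (hweak : ∃ φ : ∀ n : ℕ, (Fin n → X) → ℕ,
      (∀ n, Measurable (φ n)) ∧ (∀ n x, φ n x ≤ 2) ∧
      (∀ n, IsOpen {x : Fin n → X | φ n x = 0}) ∧
      (∀ n, IsOpen {x : Fin n → X | φ n x = 1}) ∧
      (∀ P ∈ H0, Tendsto (fun n => (Measure.pi fun _ : Fin n => P) {x | φ n x = 0})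
        atTop (𝓝 1)) ∧
      (∀ P ∈ H1, Tendsto (fun n => (Measure.pi fun _ : Fin n => P) {x | φ n x = 1})
        atTop (𝓝 1))) :
    ∃ ψ : ∀ n : ℕ, (Fin n → X) → ℕ,
      (∀ n, Measurable (ψ n)) ∧ (∀ n x, ψ n x ≤ 2) ∧
      (∀ n, IsOpen {x : Fin n → X | ψ n x = 0}) ∧
      (∀ n, IsOpen {x : Fin n → X | ψ n x = 1}) ∧
      (∀ P ∈ H0, ∀ μ : Measure (ℕ → X), IsProbabilityMeasure μ →
        (∀ n : ℕ, Measure.map (fun ω (j : Fin n) => ω (j : ℕ)) μ =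
          Measure.pi fun _ : Fin n => P) →
        μ {ω | ∀ᶠ n in atTop, ψ n (fun j : Fin n => ω (j : ℕ)) = 0} = 1) ∧
      (∀ P ∈ H1, ∀ μ : Measure (ℕ → X), IsProbabilityMeasure μ →
        (∀ n : ℕ, Measure.map (fun ω (j : Fin n) => ω (j : ℕ)) μ =
          Measure.pi fun _ : Fin n => P) →
        μ {ω | ∀ᶠ n in atTop, ψ n (fun j : Fin n => ω (j : ℕ)) = 1} = 1) :=
  stmt_5_general H0 H1 hprob hweak
end

section
/- If there exists a consistent FP-test for disjoint hypotheses H_0, H_1 ⊆ P(X), then both H_0 and H_1 are F_σ subsets (countable unions of closed sets) of W = H_0 ∪ H_1 in the weak topology. -/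
open MeasureTheory Filter Topology
open Set
open scoped ENNReal NNReal

lemma tendsto_measure_finUnion {Z : Type*} [MeasurableSpace Z]
    (ν : ℕ → Measure Z) (νl : Measure Z) [IsProbabilityMeasure νl]
    [∀ j, IsProbabilityMeasure (ν j)]
    (S : Set (Set Z))
    (hmeas : ∀ A ∈ S, MeasurableSet A)
    (hinter : ∀ A ∈ S, ∀ B ∈ S, A ∩ B ∈ S)
    (htend : ∀ A ∈ S, Tendsto (fun j => ν j A) atTop (𝓝 (νl A))) :
    ∀ (m : ℕ) (A : ℕ → Set Z), (∀ k, A k ∈ S) →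
      Tendsto (fun j => ν j (⋃ k ∈ Finset.range m, A k)) atTop
        (𝓝 (νl (⋃ k ∈ Finset.range m, A k))) := by
  intro m
  induction m with
  | zero => intro A hA; simp
  | succ m ih =>
    intro A hA
    have hun : ∀ μ : Measure Z, μ (⋃ k ∈ Finset.range (m+1), A k)
        = μ ((⋃ k ∈ Finset.range m, A k) ∪ A m) := by
      intro μ; congr 1
      rw [Finset.range_add_one]
      simp [Set.biUnion_insert, Set.union_comm]
    have hU := ih A hA
    have hAm := htend (A m) (hA m)
    have hIskew : (⋃ k ∈ Finset.range m, A k) ∩ A m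
        = ⋃ k ∈ Finset.range m, (A k ∩ A m) := iUnion₂_inter _ _
    have hI : Tendsto (fun j => ν j ((⋃ k ∈ Finset.range m, A k) ∩ A m)) atTop
        (𝓝 (νl ((⋃ k ∈ Finset.range m, A k) ∩ A m))) := by
      rw [hIskew]
      have := ih (fun k => A k ∩ A m) (fun k => hinter _ (hA k) _ (hA m))
      simpa using this
    have key : ∀ μ : Measure Z, IsProbabilityMeasure μ →
        μ ((⋃ k ∈ Finset.range m, A k) ∪ A m)
        = (μ (⋃ k ∈ Finset.range m, A k) + μ (A m)) - μ ((⋃ k ∈ Finset.range m, A k) ∩ A m) := by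
      intro μ hμ
      exact ENNReal.eq_sub_of_add_eq (measure_ne_top μ _)
        (measure_union_add_inter _ (hmeas _ (hA m)))
    have := ENNReal.Tendsto.sub (hU.add hAm) hI
      (Or.inl (ENNReal.add_ne_top.mpr ⟨measure_ne_top _ _, measure_ne_top _ _⟩))
    simp only [hun]
    rw [key νl inferInstance]
    refine this.congr fun j => ?_
    rw [key (ν j) inferInstance]

lemma le_liminf_of_pisystem {Z : Type*} [TopologicalSpace Z] [SecondCountableTopology Z]
    [MeasurableSpace Z]
    (ν : ℕ → Measure Z) (νl : Measure Z) [IsProbabilityMeasure νl]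
    [∀ j, IsProbabilityMeasure (ν j)]
    (S : Set (Set Z))
    (hmeas : ∀ A ∈ S, MeasurableSet A)
    (hopen : ∀ A ∈ S, IsOpen A)
    (hinter : ∀ A ∈ S, ∀ B ∈ S, A ∩ B ∈ S)
    (htend : ∀ A ∈ S, Tendsto (fun j => ν j A) atTop (𝓝 (νl A)))
    (hbasis : ∀ U : Set Z, IsOpen U → ∀ x ∈ U, ∃ A ∈ S, x ∈ A ∧ A ⊆ U)
    {U : Set Z} (hU : IsOpen U) :
    νl U ≤ atTop.liminf (fun j => ν j U) := by
  rcases U.eq_empty_or_nonempty with h | ⟨x0, hx0⟩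
  · simp [h]
  choose A hAS hxA hAU using fun x : U => hbasis U hU x.1 x.2
  obtain ⟨T, hTc, hTU⟩ := TopologicalSpace.isOpen_iUnion_countable A (fun x => hopen _ (hAS x))
  have hUeq : ⋃ x : U, A x = U := by
    apply subset_antisymm (iUnion_subset fun x => hAU x)
    intro y hy
    exact mem_iUnion.mpr ⟨⟨y, hy⟩, hxA ⟨y, hy⟩⟩
  have hTne : T.Nonempty := by
    by_contra hne
    rw [Set.not_nonempty_iff_eq_empty] at hne
    have : x0 ∈ ⋃ x : U, A x := mem_iUnion.mpr ⟨⟨x0, hx0⟩, hxA ⟨x0, hx0⟩⟩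
    rw [← hTU, hne] at this
    simpa using this
  obtain ⟨f, hf⟩ := Set.Countable.exists_eq_range hTc hTne
  set B : ℕ → Set Z := fun k => A (f k) with hB
  have hBS : ∀ k, B k ∈ S := fun k => hAS (f k)
  have hUB : U = ⋃ k, B k := by
    rw [← hUeq, ← hTU, hf]
    simp [hB]
  set C : ℕ → Set Z := fun m => ⋃ k ∈ Finset.range m, B k with hC
  have hCmono : Monotone C := by
    intro a b hab
    apply Set.biUnion_subset_biUnion_left
    intro k hk
    exact Finset.mem_range.mpr (lt_of_lt_of_le (Finset.mem_range.mp hk) hab)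
  have hCU : ⋃ m, C m = U := by
    rw [hUB]
    apply subset_antisymm
    · exact iUnion_subset fun m => iUnion₂_subset fun k _ => subset_iUnion B k
    · intro y hy
      obtain ⟨k, hk⟩ := mem_iUnion.mp hy
      exact mem_iUnion.mpr ⟨k + 1, mem_iUnion₂.mpr ⟨k, Finset.self_mem_range_succ k, hk⟩⟩
  have hlim : Tendsto (fun m => νl (C m)) atTop (𝓝 (νl U)) := by
    rw [← hCU]
    exact tendsto_measure_iUnion_atTop hCmono
  refine le_of_tendsto hlim (Eventually.of_forall fun m => ?_)
  calc νl (C m) = atTop.liminf (fun j => ν j (C m)) :=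
        (tendsto_measure_finUnion ν νl S hmeas hinter htend m B hBS).liminf_eq.symm
    _ ≤ atTop.liminf (fun j => ν j U) := by
        apply liminf_le_liminf (Eventually.of_forall fun j => ?_)
        apply measure_mono
        rw [hUB]
        exact iUnion₂_subset fun k _ => subset_iUnion B k

lemma le_liminf_pi {X : Type*} [MetricSpace X] [TopologicalSpace.SeparableSpace X]
    [MeasurableSpace X] [BorelSpace X]
    {P : ProbabilityMeasure X} {Pj : ℕ → ProbabilityMeasure X}
    (hconv : Tendsto Pj atTop (𝓝 P)) (n : ℕ) {U : Set (Fin n → X)} (hU : IsOpen U) :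
    (Measure.pi fun _ : Fin n => (P : Measure X)) U ≤
      atTop.liminf (fun j => (Measure.pi fun _ : Fin n => (Pj j : Measure X)) U) := by
  haveI : SecondCountableTopology X := UniformSpace.secondCountable_of_separable X
  set S : Set (Set (Fin n → X)) := {B | ∃ A : Fin n → Set X, (∀ i, IsOpen (A i)) ∧
    (∀ i, (P : Measure X) (frontier (A i)) = 0) ∧ B = Set.pi univ A} with hS
  have hmeas : ∀ B ∈ S, MeasurableSet B := by
    rintro B ⟨A, hAo, -, rfl⟩
    exact MeasurableSet.univ_pi fun i => (hAo i).measurableSet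
  have hopen : ∀ B ∈ S, IsOpen B := by
    rintro B ⟨A, hAo, -, rfl⟩
    exact isOpen_set_pi finite_univ fun i _ => hAo i
  have hinter : ∀ B ∈ S, ∀ C ∈ S, B ∩ C ∈ S := by
    rintro B ⟨A, hAo, hAf, rfl⟩ C ⟨A', hA'o, hA'f, rfl⟩
    refine ⟨fun i => A i ∩ A' i, fun i => (hAo i).inter (hA'o i), fun i => ?_, by
      rw [← pi_inter_distrib]⟩
    have h1 : frontier (A i ∩ A' i) ⊆ frontier (A i) ∪ frontier (A' i) :=
      (frontier_inter_subset (A i) (A' i)).trans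
        (union_subset_union inter_subset_left inter_subset_right)
    exact measure_mono_null h1 (measure_union_null (hAf i) (hA'f i))
  have htend : ∀ B ∈ S, Tendsto (fun j => (Measure.pi fun _ : Fin n => (Pj j : Measure X)) B)
      atTop (𝓝 ((Measure.pi fun _ : Fin n => (P : Measure X)) B)) := by
    rintro B ⟨A, hAo, hAf, rfl⟩
    have hcoord : ∀ i, Tendsto (fun j => Pj j (A i)) atTop (𝓝 (P (A i))) := fun i =>
      ProbabilityMeasure.tendsto_measure_of_null_frontier_of_tendsto hconv
        ((ProbabilityMeasure.null_iff_toMeasure_null P _).mpr (hAf i))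
    have hprod : Tendsto (fun j => ∏ i : Fin n, Pj j (A i)) atTop
        (𝓝 (∏ i : Fin n, P (A i))) := tendsto_finset_prod _ fun i _ => hcoord i
    have key : ∀ Q : ProbabilityMeasure X,
        (Measure.pi fun _ : Fin n => (Q : Measure X)) (Set.pi univ A)
          = ((∏ i : Fin n, Q (A i) : ℝ≥0) : ℝ≥0∞) := by
      intro Q
      rw [Measure.pi_pi, ENNReal.coe_finset_prod]
      exact Finset.prod_congr rfl fun i _ =>
        (ProbabilityMeasure.ennreal_coeFn_eq_coeFn_toMeasure Q (A i)).symm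
    simp only [key]
    exact ENNReal.tendsto_coe.mpr hprod
  have hbasis : ∀ U : Set (Fin n → X), IsOpen U → ∀ x ∈ U, ∃ B ∈ S, x ∈ B ∧ B ⊆ U := by
    intro U hUo x hx
    obtain ⟨ε, hε, hball⟩ := Metric.isOpen_iff.mp hUo x hx
    have hr : ∀ i : Fin n, ∃ r ∈ Set.Ioo (ε / 2) ε,
        (P : Measure X) (frontier (Metric.ball (x i) r)) = 0 := by
      intro i
      obtain ⟨r, hr, hr0⟩ := exists_null_frontier_thickening (P : Measure X) {x i}
        (half_lt_self hε)
      exact ⟨r, hr, by rwa [Metric.thickening_singleton] at hr0⟩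
    choose r hrI hrf using hr
    refine ⟨Set.pi univ fun i => Metric.ball (x i) (r i),
      ⟨_, fun i => Metric.isOpen_ball, hrf, rfl⟩, ?_, ?_⟩
    · exact fun i _ => Metric.mem_ball_self (lt_trans (half_pos hε) (hrI i).1)
    · intro y hy
      apply hball
      rw [ball_pi _ hε]
      exact fun i hi => Metric.ball_subset_ball (hrI i).2.le (hy i hi)
  exact le_liminf_of_pisystem _ _ S hmeas hopen hinter htend hbasis hU

lemma isClosed_level {X : Type*} [MetricSpace X] [TopologicalSpace.SeparableSpace X]
    [MeasurableSpace X] [BorelSpace X] (n : ℕ) {U : Set (Fin n → X)} (hUo : IsOpen U)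
    (c : ℝ≥0∞) :
    IsClosed {P : ProbabilityMeasure X |
      (Measure.pi fun _ : Fin n => (P : Measure X)) U ≤ c} := by
  apply IsSeqClosed.isClosed
  intro Pj P hPj hconv
  refine le_trans (le_liminf_pi hconv n hUo) ?_
  exact liminf_le_of_frequently_le' (Frequently.of_forall fun j => hPj j)

lemma fsigma_side {X : Type*} [MetricSpace X] [TopologicalSpace.SeparableSpace X]
    [MeasurableSpace X] [BorelSpace X]
    (W Hgood Hbad : Set (ProbabilityMeasure X))
    (hW : ∀ P ∈ W, P ∈ Hgood ∨ P ∈ Hbad) (hd : Disjoint Hgood Hbad)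
    (U V : ∀ n : ℕ, Set (Fin n → X))
    (hUV : ∀ n, Disjoint (U n) (V n))
    (hVm : ∀ n, MeasurableSet (V n))
    (hVo : ∀ n, IsOpen (V n))
    (hgood : ∀ P ∈ Hgood, Tendsto
      (fun n => (Measure.pi fun _ : Fin n => (P : Measure X)) (U n)) atTop (𝓝 1))
    (hbad : ∀ P ∈ Hbad, Tendsto
      (fun n => (Measure.pi fun _ : Fin n => (P : Measure X)) (V n)) atTop (𝓝 1)) :
    ∃ F : ℕ → Set ↥W, (∀ k, IsClosed (F k)) ∧
      (⋃ k, F k) = {P : ↥W | (P : ProbabilityMeasure X) ∈ Hgood} := by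
  have hhalf : (1 : ℝ≥0∞) / 2 < 1 := ENNReal.half_lt_self one_ne_zero ENNReal.one_ne_top
  set C : ℕ → Set (ProbabilityMeasure X) := fun m =>
    ⋂ n, ⋂ (_ : m ≤ n), {P : ProbabilityMeasure X |
      (Measure.pi fun _ : Fin n => (P : Measure X)) (V n) ≤ 1 / 2} with hC
  refine ⟨fun m => Subtype.val ⁻¹' C m, fun m => ?_, ?_⟩
  · exact (isClosed_iInter fun n => isClosed_iInter fun _ =>
      isClosed_level n (hVo n) _).preimage continuous_subtype_val
  · ext ⟨P, hP⟩
    simp only [Set.mem_iUnion, Set.mem_preimage, Set.mem_setOf_eq, hC, Set.mem_iInter]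
    constructor
    · rintro ⟨m, hm⟩
      rcases hW P hP with h | h
      · exact h
      · exfalso
        have := (hbad P h).eventually_const_lt hhalf
        obtain ⟨n, hn⟩ := (this.and (eventually_ge_atTop m)).exists
        exact absurd (hm n hn.2) (not_le.mpr hn.1)
    · intro h
      have := (hgood P h).eventually_const_lt hhalf
      obtain ⟨m, hm⟩ := eventually_atTop.mp this
      refine ⟨m, fun n hn => ?_⟩
      have hsum : (Measure.pi fun _ : Fin n => (P : Measure X)) (U n)
          + (Measure.pi fun _ : Fin n => (P : Measure X)) (V n) ≤ 1 := by
        rw [← measure_union (hUV n) (hVm n)]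
        exact prob_le_one
      by_contra hcon
      push_neg at hcon
      have : (1 : ℝ≥0∞) / 2 + 1 / 2 < _ + _ := ENNReal.add_lt_add (hm n hn) hcon
      rw [ENNReal.add_halves] at this
      exact absurd (this.trans_le hsum) (lt_irrefl _)


/-- If a consistent FP-test exists for disjoint hypotheses `H₀, H₁`, then both are
`F_σ` subsets of `W = H₀ ∪ H₁` in the weak topology. -/
theorem stmt_7 {X : Type*} [MetricSpace X] [TopologicalSpace.SeparableSpace X]
    [MeasurableSpace X] [BorelSpace X]
    (H0 H1 : Set (ProbabilityMeasure X)) (hdisj : Disjoint H0 H1)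
    (φ : ∀ n : ℕ, (Fin n → X) → ℕ)
    (hmeas : ∀ n, Measurable (φ n)) (hval : ∀ n x, φ n x ≤ 2)
    (hopen0 : ∀ n, IsOpen {x : Fin n → X | φ n x = 0})
    (hopen1 : ∀ n, IsOpen {x : Fin n → X | φ n x = 1})
    (hcons0 : ∀ P ∈ H0, Tendsto
      (fun n => (Measure.pi fun _ : Fin n => (P : Measure X)) {x | φ n x = 0})
      atTop (𝓝 1))
    (hcons1 : ∀ P ∈ H1, Tendsto
      (fun n => (Measure.pi fun _ : Fin n => (P : Measure X)) {x | φ n x = 1})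
      atTop (𝓝 1)) :
    (∃ F : ℕ → Set ↥(H0 ∪ H1), (∀ k, IsClosed (F k)) ∧
      (⋃ k, F k) = {P : ↥(H0 ∪ H1) | (P : ProbabilityMeasure X) ∈ H0}) ∧
    (∃ F : ℕ → Set ↥(H0 ∪ H1), (∀ k, IsClosed (F k)) ∧
      (⋃ k, F k) = {P : ↥(H0 ∪ H1) | (P : ProbabilityMeasure X) ∈ H1}) := by

  have hdisjUV : ∀ n, Disjoint {x : Fin n → X | φ n x = 0} {x : Fin n → X | φ n x = 1} := by
    intro n
    rw [Set.disjoint_left]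
    rintro x (h0 : φ n x = 0) (h1 : φ n x = 1)
    simp [h0] at h1
  have hm0 : ∀ n, MeasurableSet {x : Fin n → X | φ n x = 0} :=
    fun n => hmeas n (measurableSet_singleton 0)
  have hm1 : ∀ n, MeasurableSet {x : Fin n → X | φ n x = 1} :=
    fun n => hmeas n (measurableSet_singleton 1)
  constructor
  · exact fsigma_side (H0 ∪ H1) H0 H1 (fun P hP => hP) hdisj _ _ hdisjUV hm1 hopen1
      hcons0 hcons1
  · exact fsigma_side (H0 ∪ H1) H1 H0 (fun P hP => hP.symm) hdisj.symm _ _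
      (fun n => (hdisjUV n).symm) hm0 hopen0 hcons1 hcons0
end

section
/- If H_0 is not closed in W = H_0 ∪ H_1 with respect to the weak topology, then for every α ∈ (0,1) there is no weakly consistent FP-test φ_n satisfying sup_{P ∈ H_0} P^n(φ_n = 1) ≤ α for all n. -/
/-!
A point `Q ∈ H₁` in the weak closure of `H₀` exists because `H₀` is not closed in `H₀ ∪ H₁`.
The map `P ↦ Pⁿ` is weakly continuous and, by the portmanteau theorem, `μ ↦ μ(U)` is lower
semicontinuous for open `U`; hence `Qⁿ(φₙ = 1) ≤ α < 1` for every `n`, contradicting the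
consistency of the test at `Q`.
-/

open MeasureTheory Filter Topology

theorem exists_mem_closure_of_not_isClosed_setOf_mem {α : Type*} [TopologicalSpace α]
    {s t : Set α} (h : ¬ IsClosed {x : ↥(s ∪ t) | (x : α) ∈ s}) :
    ∃ y ∈ t, y ∈ closure s := by
  contrapose! h
  have hpre : {x : ↥(s ∪ t) | (x : α) ∈ s} = Subtype.val ⁻¹' closure s := by
    ext ⟨x, hx | hx⟩
    · exact iff_of_true hx (subset_closure hx)
    · exact iff_of_false (fun hxs => h x hx (subset_closure hxs)) (h x hx)
  rw [hpre]
  exact isClosed_closure.preimage continuous_subtype_val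

theorem MeasureTheory.ProbabilityMeasure.lowerSemicontinuous_measure_of_isOpen {Ω : Type*}
    [MeasurableSpace Ω] [TopologicalSpace Ω] [OpensMeasurableSpace Ω] [HasOuterApproxClosed Ω]
    {G : Set Ω} (hG : IsOpen G) :
    LowerSemicontinuous fun μ : ProbabilityMeasure Ω => (μ : Measure Ω) G :=
  lowerSemicontinuous_iff_le_liminf.2 fun _ =>
    ProbabilityMeasure.le_liminf_measure_open_of_tendsto tendsto_id hG

theorem MeasureTheory.ProbabilityMeasure.isClosed_setOf_pi_measure_le {X ι : Type*} [Fintype ι]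
    [MeasurableSpace X] [TopologicalSpace X] [SecondCountableTopology X]
    [TopologicalSpace.PseudoMetrizableSpace X] [OpensMeasurableSpace X]
    {U : Set (ι → X)} (hU : IsOpen U) (c : ENNReal) :
    IsClosed {P : ProbabilityMeasure X | (Measure.pi fun _ : ι => (P : Measure X)) U ≤ c} := by
  have hpow : Continuous fun P : ProbabilityMeasure X => ProbabilityMeasure.pi fun _ : ι => P :=
    continuous_pi.comp (_root_.continuous_pi fun _ => continuous_id)
  exact ((lowerSemicontinuous_measure_of_isOpen hU).comp hpow).isClosed_preimage c

theorem stmt_8_general {X : Type*} [MetricSpace X] [TopologicalSpace.SeparableSpace X]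
    [MeasurableSpace X] [BorelSpace X]
    (H0 H1 : Set (ProbabilityMeasure X))
    (hnc : ¬ IsClosed {P : ↥(H0 ∪ H1) | (P : ProbabilityMeasure X) ∈ H0})
    (α : ℝ) (hα1 : α < 1) :
    ¬ ∃ φ : ∀ n : ℕ, (Fin n → X) → ℕ,
      (∀ n, Measurable (φ n)) ∧ (∀ n x, φ n x ≤ 2) ∧
      (∀ n, IsOpen {x : Fin n → X | φ n x = 0}) ∧
      (∀ n, IsOpen {x : Fin n → X | φ n x = 1}) ∧
      (∀ P ∈ H0, Tendsto
        (fun n => (Measure.pi fun _ : Fin n => (P : Measure X)) {x | φ n x = 0})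
        atTop (𝓝 1)) ∧
      (∀ P ∈ H1, Tendsto
        (fun n => (Measure.pi fun _ : Fin n => (P : Measure X)) {x | φ n x = 1})
        atTop (𝓝 1)) ∧
      (∀ n : ℕ, ∀ P ∈ H0,
        (Measure.pi fun _ : Fin n => (P : Measure X)) {x | φ n x = 1} ≤
          ENNReal.ofReal α) := by
  rintro ⟨φ, -, -, -, hopen1, -, hcons1, hbound⟩
  obtain ⟨Q, hQH1, hQcl⟩ := exists_mem_closure_of_not_isClosed_setOf_mem hnc
  have hQbound : ∀ n, (Measure.pi fun _ : Fin n => (Q : Measure X)) {x | φ n x = 1} ≤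
      ENNReal.ofReal α := fun n =>
    closure_minimal (hbound n)
      (ProbabilityMeasure.isClosed_setOf_pi_measure_le (hopen1 n) _) hQcl
  obtain ⟨n, hn⟩ :=
    ((hcons1 Q hQH1).eventually (eventually_gt_nhds (ENNReal.ofReal_lt_one.2 hα1))).exists
  exact (hQbound n).not_gt hn

/-- If `H₀` is not closed in `W = H₀ ∪ H₁` (weak topology), then for every
`α ∈ (0,1)` there is no weakly consistent FP-test with
`sup_{P ∈ H₀} P^n(φ_n = 1) ≤ α` for all `n`. -/
theorem stmt_8 {X : Type*} [MetricSpace X] [TopologicalSpace.SeparableSpace X]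
    [MeasurableSpace X] [BorelSpace X]
    (H0 H1 : Set (ProbabilityMeasure X)) (hdisj : Disjoint H0 H1)
    (hnc : ¬ IsClosed {P : ↥(H0 ∪ H1) | (P : ProbabilityMeasure X) ∈ H0})
    (α : ℝ) (hα0 : 0 < α) (hα1 : α < 1) :
    ¬ ∃ φ : ∀ n : ℕ, (Fin n → X) → ℕ,
      (∀ n, Measurable (φ n)) ∧ (∀ n x, φ n x ≤ 2) ∧
      (∀ n, IsOpen {x : Fin n → X | φ n x = 0}) ∧
      (∀ n, IsOpen {x : Fin n → X | φ n x = 1}) ∧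
      (∀ P ∈ H0, Tendsto
        (fun n => (Measure.pi fun _ : Fin n => (P : Measure X)) {x | φ n x = 0})
        atTop (𝓝 1)) ∧
      (∀ P ∈ H1, Tendsto
        (fun n => (Measure.pi fun _ : Fin n => (P : Measure X)) {x | φ n x = 1})
        atTop (𝓝 1)) ∧
      (∀ n : ℕ, ∀ P ∈ H0,
        (Measure.pi fun _ : Fin n => (P : Measure X)) {x | φ n x = 1} ≤
          ENNReal.ofReal α) :=
  stmt_8_general H0 H1 hnc α hα1
end

section
/- Let H_0 and H_1 be subsets of P(X) contained in a weakly compact set. If there exists an FP-test φ_n whose regions {φ_n=0} and {φ_n=1} have disjoint closures and which is uniformly consistent (sup_{P∈H_i} P^n(φ_n ≠ i) → 0 for i=0,1), then the weak closures of H_0 and H_1 in P(X) are disjoint. -/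
/-!
If `Q` lay in both weak closures, pick `n` with both error probabilities at most `1/4` on
`H₀` and `H₁`. By the portmanteau theorem `μ ↦ μ F` is weakly upper semicontinuous for closed
`F`, and `P ↦ Pⁿ` is weakly continuous, so the bounds `Pⁿ(cl {φₙ = i}) ≥ 3/4` valid on `Hᵢ`
pass to `Qⁿ`. As the two closures are disjoint, `Qⁿ` would have total mass at least `3/2`.
-/

open Filter

namespace MeasureTheory

theorem ProbabilityMeasure.upperSemicontinuous_apply_of_isClosed {Ω : Type*}
    [MeasurableSpace Ω] [TopologicalSpace Ω] [OpensMeasurableSpace Ω] [HasOuterApproxClosed Ω]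
    {F : Set Ω} (hF : IsClosed F) :
    UpperSemicontinuous fun μ : ProbabilityMeasure Ω => (μ : Measure Ω) F :=
  upperSemicontinuous_iff_limsup_le.2 fun _ =>
    ProbabilityMeasure.limsup_measure_closed_le_of_tendsto tendsto_id hF

theorem one_sub_le_measure_closure_of_measure_compl_le {Ω : Type*}
    [MeasurableSpace Ω] [TopologicalSpace Ω] (μ : Measure Ω) [IsProbabilityMeasure μ]
    {A : Set Ω} {δ : ENNReal}
    (hA : μ Aᶜ ≤ δ) : 1 - δ ≤ μ (closure A) := by
  refine tsub_le_iff_right.2 ?_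
  calc 1 = μ (A ∪ Aᶜ) := by rw [Set.union_compl_self, measure_univ]
    _ ≤ μ A + μ Aᶜ := measure_union_le A Aᶜ
    _ ≤ μ (closure A) + δ := add_le_add (measure_mono subset_closure) hA

theorem one_sub_le_pi_measure_closure_of_mem_closure {X ι : Type*} [Fintype ι]
    [TopologicalSpace X] [SecondCountableTopology X]
    [TopologicalSpace.PseudoMetrizableSpace X] [MeasurableSpace X] [OpensMeasurableSpace X]
    {H : Set (ProbabilityMeasure X)} {Q : ProbabilityMeasure X} (hQ : Q ∈ closure H)
    {A : Set (ι → X)} {δ : ENNReal}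
    (hA : ∀ P ∈ H, Measure.pi (fun _ : ι => (P : Measure X)) Aᶜ ≤ δ) :
    1 - δ ≤ Measure.pi (fun _ : ι => (Q : Measure X)) (closure A) := by
  have hpow : Continuous fun P : ProbabilityMeasure X => ProbabilityMeasure.pi fun _ : ι => P :=
    ProbabilityMeasure.continuous_pi.comp (continuous_pi fun _ => continuous_id)
  have hclosed := ((ProbabilityMeasure.upperSemicontinuous_apply_of_isClosed
    (isClosed_closure (s := A))).comp hpow).isClosed_preimage (1 - δ)
  exact closure_minimal (fun P hP => one_sub_le_measure_closure_of_measure_compl_le _ (hA P hP))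
    hclosed hQ

end MeasureTheory

open MeasureTheory

theorem stmt_9_general {X : Type*} [MetricSpace X] [TopologicalSpace.SeparableSpace X]
    [MeasurableSpace X] [BorelSpace X]
    (H0 H1 : Set (ProbabilityMeasure X))
    (φ : ∀ n : ℕ, (Fin n → X) → ℕ)
    (hdisjcl : ∀ n, Disjoint (closure {x : Fin n → X | φ n x = 0})
      (closure {x : Fin n → X | φ n x = 1}))
    (hunif0 : ∀ ε > (0 : ℝ), ∃ N : ℕ, ∀ n ≥ N, ∀ P ∈ H0,
      (Measure.pi fun _ : Fin n => (P : Measure X)) {x | φ n x ≠ 0} ≤ ENNReal.ofReal ε)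
    (hunif1 : ∀ ε > (0 : ℝ), ∃ N : ℕ, ∀ n ≥ N, ∀ P ∈ H1,
      (Measure.pi fun _ : Fin n => (P : Measure X)) {x | φ n x ≠ 1} ≤ ENNReal.ofReal ε) :
    Disjoint (closure H0) (closure H1) := by
  have := UniformSpace.secondCountable_of_separable X
  refine Set.disjoint_left.2 fun Q hQ0 hQ1 => ?_
  obtain ⟨N0, hN0⟩ := hunif0 (1 / 4) (by norm_num)
  obtain ⟨N1, hN1⟩ := hunif1 (1 / 4) (by norm_num)
  set n := max N0 N1
  have h0 := one_sub_le_pi_measure_closure_of_mem_closure hQ0 (hN0 n (le_max_left N0 N1))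
  have h1 := one_sub_le_pi_measure_closure_of_mem_closure hQ1 (hN1 n (le_max_right N0 N1))
  have hsum : 1 - ENNReal.ofReal (1 / 4) + (1 - ENNReal.ofReal (1 / 4)) ≤ 1 :=
    calc _ ≤ _ := add_le_add h0 h1
      _ = Measure.pi (fun _ : Fin n => (Q : Measure X))
            (closure {x | φ n x = 0} ∪ closure {x | φ n x = 1}) :=
        (measure_union (hdisjcl n) isClosed_closure.measurableSet).symm
      _ ≤ 1 := prob_le_one
  rw [← ENNReal.ofReal_one, ← ENNReal.ofReal_sub _ (by norm_num),
    ← ENNReal.ofReal_add (by norm_num) (by norm_num), ENNReal.ofReal_le_ofReal_iff zero_le_one]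
    at hsum
  norm_num at hsum

/-- If `H₀, H₁` lie in a weakly compact set and admit a uniformly consistent FP-test
whose decision regions have disjoint closures, then the weak closures of `H₀` and `H₁`
are disjoint. -/
theorem stmt_9 {X : Type*} [MetricSpace X] [TopologicalSpace.SeparableSpace X]
    [MeasurableSpace X] [BorelSpace X]
    (H0 H1 : Set (ProbabilityMeasure X))
    (K : Set (ProbabilityMeasure X)) (hK : IsCompact K) (h0K : H0 ⊆ K) (h1K : H1 ⊆ K)
    (φ : ∀ n : ℕ, (Fin n → X) → ℕ)
    (hmeas : ∀ n, Measurable (φ n)) (hval : ∀ n x, φ n x ≤ 2)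
    (hopen0 : ∀ n, IsOpen {x : Fin n → X | φ n x = 0})
    (hopen1 : ∀ n, IsOpen {x : Fin n → X | φ n x = 1})
    (hdisjcl : ∀ n, Disjoint (closure {x : Fin n → X | φ n x = 0})
      (closure {x : Fin n → X | φ n x = 1}))
    (hunif0 : ∀ ε > (0 : ℝ), ∃ N : ℕ, ∀ n ≥ N, ∀ P ∈ H0,
      (Measure.pi fun _ : Fin n => (P : Measure X)) {x | φ n x ≠ 0} ≤ ENNReal.ofReal ε)
    (hunif1 : ∀ ε > (0 : ℝ), ∃ N : ℕ, ∀ n ≥ N, ∀ P ∈ H1,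
      (Measure.pi fun _ : Fin n => (P : Measure X)) {x | φ n x ≠ 1} ≤ ENNReal.ofReal ε) :
    Disjoint (closure H0) (closure H1) :=
  stmt_9_general H0 H1 φ hdisjcl hunif0 hunif1
end

section
/- For the empirical measure P_n^X of n i.i.d. samples from a Borel probability measure P on a separable metric space X, for every ε > 0 and η > 0 there exists N_η ∈ ℕ (depending only on a compact K with P(X∖K) ≤ ε) such that E_P[d_BL(P_n^X, P)] ≤ N_η/√n + 2η + 2ε. -/
open MeasureTheory Filter Topology

/-- The bounded Lipschitz distance between two measures. -/
noncomputable def BLdist {α : Type*} [MeasurableSpace α] [PseudoMetricSpace α]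
    (μ ν : Measure α) : ℝ :=
  sSup {r | ∃ f : α → ℝ, (∀ a, |f a| ≤ 1) ∧ LipschitzWith 1 f ∧
    r = |(∫ a, f a ∂μ) - ∫ a, f a ∂ν|}

/-- The empirical measure of `x ∈ X^n`. -/
noncomputable def empMeasure {X : Type*} [MeasurableSpace X] (n : ℕ) (x : Fin n → X) :
    Measure X :=
  (n : ENNReal)⁻¹ • ∑ i : Fin n, Measure.dirac (x i)

/-!
Separability gives a countable measurable partition of `X` into pieces of diameter at most `η`;
keep finitely many pieces `A i`, `i ∈ t`, whose union `S` satisfies `P Sᶜ ≤ ε` (no tightness is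
needed). A 1-Lipschitz `f` with `|f| ≤ 1` is within `η` of the step function `f (u i)` on `A i`
and within `1` of `0` off `S`, so for probability measures `Q` and `P`
`d_BL(Q, P) ≤ 2η + Q Sᶜ + P Sᶜ + ∑ i ∈ t, |Q (A i) - P (A i)|`.
For `Q = P_n` the term `P_n Sᶜ` has mean `P Sᶜ`, and `P_n (A i)` is an average of `n`
independent indicators, so `E |P_n (A i) - P (A i)| ≤ √Var ≤ 1 / (2√n)`; hence `N = #t`.
-/

open Function Metric Set ProbabilityTheory

section BoundedLipschitz

variable {X : Type*} [PseudoMetricSpace X] [MeasurableSpace X]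

lemma BLdist_nonneg (μ ν : Measure X) : 0 ≤ BLdist μ ν :=
  Real.sSup_nonneg fun _ ⟨_, _, _, hr⟩ => hr ▸ abs_nonneg _

lemma BLdist_le {μ ν : Measure X} {C : ℝ} (hC : 0 ≤ C)
    (h : ∀ f : X → ℝ, (∀ a, |f a| ≤ 1) → LipschitzWith 1 f →
      |(∫ a, f a ∂μ) - ∫ a, f a ∂ν| ≤ C) :
    BLdist μ ν ≤ C :=
  Real.sSup_le (fun _ ⟨f, hfb, hf, hr⟩ => hr ▸ h f hfb hf) hC

variable [OpensMeasurableSpace X] {ι : Type*} {t : Finset ι} {A : ι → Set X} {u : ι → X} {r : ℝ}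

lemma abs_integral_sub_sum_le (Q : Measure X) [IsProbabilityMeasure Q]
    (hA : ∀ i ∈ t, MeasurableSet (A i)) (hdisj : (t : Set ι).PairwiseDisjoint A)
    (hAu : ∀ i ∈ t, A i ⊆ closedBall (u i) r) (hr : 0 ≤ r)
    {f : X → ℝ} (hfb : ∀ a, |f a| ≤ 1) (hf : LipschitzWith 1 f) :
    |(∫ a, f a ∂Q) - ∑ i ∈ t, f (u i) * Q.real (A i)| ≤ r + Q.real (⋃ i ∈ t, A i)ᶜ := by
  set S := ⋃ i ∈ t, A i
  have hS : MeasurableSet S := Finset.measurableSet_biUnion t hA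
  set g : X → ℝ := fun a => ∑ i ∈ t, (A i).indicator (fun _ => f (u i)) a
  have hfg : ∀ a, |f a - g a| ≤ r + Sᶜ.indicator (fun _ => 1) a := by
    intro a
    by_cases ha : a ∈ S
    · obtain ⟨i, hi, hai⟩ := mem_iUnion₂.1 ha
      have hgi : g a = f (u i) := by
        refine (Finset.sum_eq_single_of_mem i hi fun j hj hji => ?_).trans (indicator_of_mem hai _)
        exact indicator_of_notMem (fun haj => (hdisj hj hi hji).le_bot ⟨haj, hai⟩) _
      rw [hgi, indicator_of_notMem (notMem_compl_iff.2 ha), add_zero, ← Real.dist_eq]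
      simpa using (hf.dist_le_mul a (u i)).trans (by simpa using hAu i hi hai)
    · have hg0 : g a = 0 := Finset.sum_eq_zero fun i hi =>
        indicator_of_notMem (fun hai => ha (mem_iUnion₂.2 ⟨i, hi, hai⟩)) _
      rw [hg0, sub_zero, indicator_of_mem (mem_compl ha)]
      linarith [hfb a]
  have hfint : Integrable f Q := Integrable.of_bound hf.continuous.aestronglyMeasurable 1
    (ae_of_all _ fun a => by simpa using hfb a)
  have hgint : Integrable g Q :=
    integrable_finsetSum _ fun i hi => (integrable_const _).indicator (hA i hi)
  have hg : ∫ a, g a ∂Q = ∑ i ∈ t, f (u i) * Q.real (A i) := by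
    rw [integral_finsetSum _ fun i hi => (integrable_const _).indicator (hA i hi)]
    refine Finset.sum_congr rfl fun i hi => ?_
    rw [integral_indicator_const _ (hA i hi), smul_eq_mul, mul_comm]
  calc |(∫ a, f a ∂Q) - ∑ i ∈ t, f (u i) * Q.real (A i)|
      = |∫ a, (f a - g a) ∂Q| := by rw [integral_sub hfint hgint, hg]
    _ ≤ ∫ a, |f a - g a| ∂Q := abs_integral_le_integral_abs
    _ ≤ ∫ a, (r + Sᶜ.indicator (fun _ => 1) a) ∂Q :=
        integral_mono (hfint.sub hgint).abs
          ((integrable_const r).add ((integrable_const 1).indicator hS.compl)) hfg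
    _ = r + Q.real Sᶜ := by
        rw [integral_add (integrable_const r) ((integrable_const 1).indicator hS.compl),
          integral_indicator_const _ hS.compl]
        simp

lemma BLdist_le_sum_abs_measureReal_sub (Q P : Measure X) [IsProbabilityMeasure Q]
    [IsProbabilityMeasure P] (hA : ∀ i ∈ t, MeasurableSet (A i))
    (hdisj : (t : Set ι).PairwiseDisjoint A) (hAu : ∀ i ∈ t, A i ⊆ closedBall (u i) r)
    (hr : 0 ≤ r) :
    BLdist Q P ≤ 2 * r + Q.real (⋃ i ∈ t, A i)ᶜ + P.real (⋃ i ∈ t, A i)ᶜ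
      + ∑ i ∈ t, |Q.real (A i) - P.real (A i)| := by
  refine BLdist_le (by positivity) fun f hfb hf => ?_
  have hQ := abs_integral_sub_sum_le Q hA hdisj hAu hr hfb hf
  have hP := abs_integral_sub_sum_le P hA hdisj hAu hr hfb hf
  have hsum : |∑ i ∈ t, f (u i) * Q.real (A i) - ∑ i ∈ t, f (u i) * P.real (A i)|
      ≤ ∑ i ∈ t, |Q.real (A i) - P.real (A i)| := by
    rw [← Finset.sum_sub_distrib]
    refine (Finset.abs_sum_le_sum_abs _ _).trans (Finset.sum_le_sum fun i _ => ?_)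
    rw [← mul_sub, abs_mul]
    exact mul_le_of_le_one_left (abs_nonneg _) (hfb _)
  have := abs_sub_le (∫ a, f a ∂Q) (∑ i ∈ t, f (u i) * Q.real (A i)) (∫ a, f a ∂P)
  have := abs_sub_le (∑ i ∈ t, f (u i) * Q.real (A i)) (∑ i ∈ t, f (u i) * P.real (A i))
    (∫ a, f a ∂P)
  rw [abs_sub_comm] at hP
  linarith

end BoundedLipschitz

lemma integral_abs_sub_integral_le_sqrt_variance {Ω : Type*} [MeasurableSpace Ω]
    {μ : Measure Ω} [IsProbabilityMeasure μ] {Y : Ω → ℝ} (hY : MemLp Y 2 μ) :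
    ∫ ω, |Y ω - μ[Y]| ∂μ ≤ √(Var[Y; μ]) := by
  have hZ : MemLp (fun ω => |Y ω - μ[Y]|) 2 μ := (hY.sub (memLp_const _)).abs
  have hsq := variance_nonneg (fun ω => |Y ω - μ[Y]|) μ
  rw [variance_eq_sub hZ] at hsq
  simp only [Pi.pow_apply, sq_abs] at hsq
  rw [variance_eq_integral hY.aemeasurable]
  exact Real.le_sqrt_of_sq_le (by linarith)

section Empirical

variable {X : Type*} [MeasurableSpace X] {n : ℕ}

lemma isProbabilityMeasure_empMeasure (hn : n ≠ 0) (x : Fin n → X) :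
    IsProbabilityMeasure (empMeasure n x) := by
  constructor
  simp [empMeasure, ENNReal.inv_mul_cancel (Nat.cast_ne_zero.2 hn) (ENNReal.natCast_ne_top n)]

lemma empMeasure_real_apply (x : Fin n → X) {s : Set X} (hs : MeasurableSet s) :
    (empMeasure n x).real s = ∑ k, s.indicator (fun _ => (n : ℝ)⁻¹) (x k) := by
  simp only [empMeasure, measureReal_def, Measure.smul_apply, Measure.coe_finsetSum,
    Finset.sum_apply, Measure.dirac_apply' _ hs, smul_eq_mul]
  rw [ENNReal.toReal_mul, ENNReal.toReal_inv, ENNReal.toReal_natCast,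
    ENNReal.toReal_sum fun k _ => by by_cases h : x k ∈ s <;> simp [h], Finset.mul_sum]
  exact Finset.sum_congr rfl fun k _ => by by_cases h : x k ∈ s <;> simp [h]

lemma empMeasure_real_eq_sum {s : Set X} (hs : MeasurableSet s) :
    (fun x : Fin n → X => (empMeasure n x).real s)
      = ∑ k, fun x => s.indicator (fun _ => (n : ℝ)⁻¹) (x k) := by
  ext x
  rw [empMeasure_real_apply x hs, Finset.sum_apply]

variable (P : Measure X) [IsProbabilityMeasure P]

lemma integrable_empMeasure_real {s : Set X} (hs : MeasurableSet s) :
    Integrable (fun x => (empMeasure n x).real s) (Measure.pi fun _ : Fin n => P) := by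
  rw [empMeasure_real_eq_sum hs]
  have hg : Integrable (s.indicator fun _ => (n : ℝ)⁻¹) P := (integrable_const _).indicator hs
  exact integrable_finsetSum' _ fun k _ => integrable_comp_eval (μ := fun _ => P) (i := k) hg

lemma integral_empMeasure_real (hn : n ≠ 0) {s : Set X} (hs : MeasurableSet s) :
    ∫ x, (empMeasure n x).real s ∂(Measure.pi fun _ : Fin n => P) = P.real s := by
  have hg : Integrable (s.indicator fun _ => (n : ℝ)⁻¹) P := (integrable_const _).indicator hs
  simp_rw [empMeasure_real_apply _ hs]
  rw [integral_finsetSum _ fun k _ => integrable_comp_eval (μ := fun _ => P) (i := k) hg]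
  simp_rw [integral_comp_eval (μ := fun _ => P) hg.aestronglyMeasurable,
    integral_indicator_const _ hs]
  rw [Finset.sum_const, Finset.card_univ, Fintype.card_fin, nsmul_eq_mul, smul_eq_mul]
  field_simp

lemma variance_empMeasure_real_le {s : Set X} (hs : MeasurableSet s) :
    Var[fun x => (empMeasure n x).real s; Measure.pi fun _ : Fin n => P] ≤ (4 * n : ℝ)⁻¹ := by
  rw [empMeasure_real_eq_sum hs,
    variance_sum_pi fun _ => memLp_indicator_const 2 hs _ (Or.inr (measure_ne_top _ _))]
  calc ∑ _k : Fin n, Var[s.indicator (fun _ => (n : ℝ)⁻¹); P]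
      ≤ ∑ _k : Fin n, (((n : ℝ)⁻¹ - 0) / 2) ^ 2 := by
        refine Finset.sum_le_sum fun _ _ => variance_le_sq_of_bounded (ae_of_all _ fun a => ?_)
          ((measurable_const.indicator hs).aemeasurable)
        by_cases h : a ∈ s <;> simp [h]
    _ = (4 * n : ℝ)⁻¹ := by
        rw [Finset.sum_const, Finset.card_univ, Fintype.card_fin, nsmul_eq_mul]
        rcases eq_or_ne n 0 with rfl | hn
        · simp
        · field_simp
          ring

lemma integral_abs_empMeasure_real_sub_le (hn : n ≠ 0) {s : Set X} (hs : MeasurableSet s) :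
    ∫ x, |(empMeasure n x).real s - P.real s| ∂(Measure.pi fun _ : Fin n => P)
      ≤ (2 * √n)⁻¹ := by
  have hY : MemLp (fun x => (empMeasure n x).real s) 2 (Measure.pi fun _ : Fin n => P) := by
    rw [empMeasure_real_eq_sum hs]
    exact memLp_finsetSum' _ fun k _ =>
      (memLp_indicator_const 2 hs _ (Or.inr (measure_ne_top _ _))).comp_measurePreserving
        (measurePreserving_eval _ k)
  calc ∫ x, |(empMeasure n x).real s - P.real s| ∂(Measure.pi fun _ : Fin n => P)
      ≤ √(Var[fun x => (empMeasure n x).real s; Measure.pi fun _ : Fin n => P]) := by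
        simpa only [integral_empMeasure_real P hn hs]
          using integral_abs_sub_integral_le_sqrt_variance hY
    _ ≤ √((4 * n : ℝ)⁻¹) := Real.sqrt_le_sqrt (variance_empMeasure_real_le P hs)
    _ = (2 * √n)⁻¹ := by
        rw [Real.sqrt_inv, Real.sqrt_mul (by norm_num), show (4 : ℝ) = 2 ^ 2 by norm_num,
          Real.sqrt_sq zero_le_two]

end Empirical

lemma exists_measurable_partition_closedBall_measureReal_compl_le {X : Type*}
    [PseudoMetricSpace X] [TopologicalSpace.SeparableSpace X] [Nonempty X] [MeasurableSpace X]
    [OpensMeasurableSpace X] (P : Measure X) [IsFiniteMeasure P] {r ε : ℝ} (hr : 0 < r)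
    (hε : 0 < ε) :
    ∃ (A : ℕ → Set X) (u : ℕ → X) (t : Finset ℕ), (∀ i, MeasurableSet (A i)) ∧
      Pairwise (Disjoint on A) ∧ (∀ i, A i ⊆ closedBall (u i) r) ∧
      P.real (⋃ i ∈ t, A i)ᶜ ≤ ε := by
  obtain ⟨A, hA, hAb, hAdiam, hAcover, hdisj⟩ :=
    SeparableSpace.exists_measurable_partition_diam_le X hr
  have hcenter : ∀ i, ∃ c, A i ⊆ closedBall c r := fun i => by
    rcases (A i).eq_empty_or_nonempty with h | ⟨c, hc⟩
    · exact ⟨Classical.arbitrary X, h ▸ empty_subset _⟩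
    · exact ⟨c, fun a ha => (dist_le_diam_of_mem (hAb i) ha hc).trans (hAdiam i)⟩
  choose u hu using hcenter
  have hlim : Tendsto (fun m => P.real (accumulate A m)) atTop (𝓝 (P.real univ)) := by
    rw [← hAcover]
    exact (ENNReal.tendsto_toReal (measure_ne_top _ _)).comp tendsto_measure_iUnion_accumulate
  obtain ⟨m, hm⟩ := (hlim.eventually (lt_mem_nhds (sub_lt_self _ hε))).exists
  have hS : ⋃ i ∈ Finset.Iic m, A i = accumulate A m := by
    simp [accumulate_def]
  refine ⟨A, u, Finset.Iic m, hA, hdisj, hu, ?_⟩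
  rw [measureReal_compl (Finset.measurableSet_biUnion _ fun i _ => hA i), hS]
  linarith

lemma integral_BLdist_empMeasure_le {X : Type*} [PseudoMetricSpace X] [MeasurableSpace X]
    [OpensMeasurableSpace X] (P : Measure X) [IsProbabilityMeasure P] {n : ℕ} (hn : n ≠ 0)
    {ι : Type*} {t : Finset ι} {A : ι → Set X} {u : ι → X} {r : ℝ}
    (hA : ∀ i ∈ t, MeasurableSet (A i)) (hdisj : (t : Set ι).PairwiseDisjoint A)
    (hAu : ∀ i ∈ t, A i ⊆ closedBall (u i) r) (hr : 0 ≤ r) :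
    ∫ x, BLdist (empMeasure n x) P ∂(Measure.pi fun _ : Fin n => P)
      ≤ 2 * r + 2 * P.real (⋃ i ∈ t, A i)ᶜ + t.card / (2 * √n) := by
  set π := Measure.pi fun _ : Fin n => P
  set S := ⋃ i ∈ t, A i
  have hS : MeasurableSet S := Finset.measurableSet_biUnion t hA
  have hY : Integrable (fun x => (empMeasure n x).real Sᶜ) π :=
    integrable_empMeasure_real P hS.compl
  have hdev : ∀ i ∈ t, Integrable (fun x => |(empMeasure n x).real (A i) - P.real (A i)|) π :=
    fun i hi => ((integrable_empMeasure_real P (hA i hi)).sub (integrable_const _)).abs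
  have hG : Integrable (fun x => 2 * r + (empMeasure n x).real Sᶜ + P.real Sᶜ) π :=
    ((integrable_const _).add hY).add (integrable_const _)
  have hH : Integrable (fun x => ∑ i ∈ t, |(empMeasure n x).real (A i) - P.real (A i)|) π :=
    integrable_finsetSum _ hdev
  calc ∫ x, BLdist (empMeasure n x) P ∂π
      ≤ ∫ x, (2 * r + (empMeasure n x).real Sᶜ + P.real Sᶜ
          + ∑ i ∈ t, |(empMeasure n x).real (A i) - P.real (A i)|) ∂π := by
        refine integral_mono_of_nonneg (ae_of_all _ fun x => BLdist_nonneg _ _) (hG.add hH)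
          (ae_of_all _ fun x => ?_)
        have := isProbabilityMeasure_empMeasure hn x
        exact BLdist_le_sum_abs_measureReal_sub _ P hA hdisj hAu hr
    _ = 2 * r + P.real Sᶜ + P.real Sᶜ
          + ∑ i ∈ t, ∫ x, |(empMeasure n x).real (A i) - P.real (A i)| ∂π := by
        rw [integral_add hG hH,
          integral_add (by exact (integrable_const _).add hY) (integrable_const _),
          integral_add (integrable_const _) hY, integral_finsetSum _ hdev,
          integral_empMeasure_real P hn hS.compl]
        simp
    _ ≤ 2 * r + P.real Sᶜ + P.real Sᶜ + ∑ _i ∈ t, (2 * √n)⁻¹ := by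
        gcongr with i hi
        exact integral_abs_empMeasure_real_sub_le P hn (hA i hi)
    _ = 2 * r + 2 * P.real Sᶜ + t.card / (2 * √n) := by
        rw [Finset.sum_const, nsmul_eq_mul]
        ring

/-- Expected bounded Lipschitz distance between the empirical measure and the truth:
for every `ε, η > 0` there is `N_η` with
`E_P[d_BL(P_n^X, P)] ≤ N_η/√n + 2η + 2ε` for all `n ≥ 1`. -/
theorem stmt_11 {X : Type*} [MetricSpace X] [TopologicalSpace.SeparableSpace X]
    [MeasurableSpace X] [BorelSpace X]
    (P : Measure X) [IsProbabilityMeasure P]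
    (ε η : ℝ) (hε : 0 < ε) (hη : 0 < η) :
    ∃ N : ℕ, ∀ n : ℕ, 1 ≤ n →
      (∫ x, BLdist (empMeasure n x) P ∂(Measure.pi fun _ : Fin n => P)) ≤
        (N : ℝ) / Real.sqrt n + 2 * η + 2 * ε := by
  have := nonempty_of_isProbabilityMeasure P
  obtain ⟨A, u, t, hA, hdisj, hAu, hPS⟩ :=
    exists_measurable_partition_closedBall_measureReal_compl_le P hη hε
  refine ⟨t.card, fun n hn => ?_⟩
  have hsqrt : 0 < √(n : ℝ) := Real.sqrt_pos.2 (by exact_mod_cast hn)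
  calc ∫ x, BLdist (empMeasure n x) P ∂(Measure.pi fun _ : Fin n => P)
      ≤ 2 * η + 2 * P.real (⋃ i ∈ t, A i)ᶜ + t.card / (2 * √n) :=
        integral_BLdist_empMeasure_le P (by omega) (fun i _ => hA i)
          (hdisj.set_pairwise _) (fun i _ => hAu i) hη.le
    _ ≤ t.card / √n + 2 * η + 2 * ε := by
        have : (t.card : ℝ) / (2 * √n) ≤ t.card / √n := by gcongr; linarith
        linarith
end

section
/- Let X, Y, Z be complete separable metric spaces with Z perfect (no isolated points). Then the set of Borel probability measures P on X × Y × Z under which X is conditionally independent of Y given Z is dense in P(X × Y × Z) with respect to the weak topology. -/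
/-!
Push a measure forward by `(x, y, z) ↦ (φ (ζ (x, z)), y, ζ (x, z))`, where `ζ (x, z)` is a point
within `ε` of `z` that encodes, through a countable family of distinct points, the cell of an
`ε`-partition of `X` containing `x`, and `φ` decodes it to a point within `ε` of `x`. Since `Z` has
no isolated points, every ball of `Z` is infinite and such distinct code points exist in every
ball. Under the pushed-forward measure the first coordinate is a measurable function of the third,
hence conditionally independent of anything given it; as `ε → 0` these measures converge weakly to
the original one.
-/

open MeasureTheory ProbabilityTheory Topology Filter Set Metric Function TopologicalSpace

section ConditionalIndependence

variable {Ω β γ δ : Type*} {m' : MeasurableSpace Ω} [mΩ : MeasurableSpace Ω]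
  [StandardBorelSpace Ω] {μ : Measure Ω} [IsFiniteMeasure μ] [MeasurableSpace β]
  [MeasurableSpace γ] [MeasurableSpace δ]

theorem ProbabilityTheory.CondIndepFun.congr_left {hm' : m' ≤ mΩ} {f f' : Ω → β} {g : Ω → γ}
    (hfg : CondIndepFun m' hm' f g μ) (hf : f =ᵐ[μ] f') : CondIndepFun m' hm' f' g μ :=
  Kernel.IndepFun.congr' hfg
    (Measure.ae_ae_of_ae_comp (by rwa [condExpKernel_comp_trim]))
    (ae_of_all _ fun _ => EventuallyEq.rfl)

theorem ProbabilityTheory.condIndepFun_of_ae_eq_comp {k : Ω → δ} (hk : Measurable k)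
    {φ : δ → β} (hφ : Measurable φ) {f : Ω → β} {g : Ω → γ} (hf : f =ᵐ[μ] φ ∘ k)
    (hg : Measurable g) :
    CondIndepFun (MeasurableSpace.comap k inferInstance) hk.comap_le f g μ :=
  (condIndepFun_of_measurable_left (hφ.comp (comap_measurable k)) hg).congr_left hf.symm

end ConditionalIndependence

theorem MeasureTheory.ProbabilityMeasure.tendsto_map_of_tendsto {Ω : Type*} [MeasurableSpace Ω]
    [TopologicalSpace Ω] [OpensMeasurableSpace Ω] (P : ProbabilityMeasure Ω) {T : ℕ → Ω → Ω}
    (hT : ∀ n, Measurable (T n)) (hlim : ∀ ω, Tendsto (fun n => T n ω) atTop (𝓝 ω)) :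
    Tendsto (fun n => P.map (hT n).aemeasurable) atTop (𝓝 P) := by
  have h := (tendstoInDistribution_of_ae_tendsto (μ' := (P : Measure Ω))
    (fun n => (hT n).aemeasurable) aemeasurable_id (ae_of_all _ hlim)).tendsto
  simp only [Measure.map_id] at h
  exact h

theorem exists_injective_forall_mem_of_infinite {α : Type*} {s : ℕ → Set α}
    (hs : ∀ n, (s n).Infinite) : ∃ f : ℕ → α, Injective f ∧ ∀ n, f n ∈ s n := by
  -- choose the `n`-th term in `s n` off the earlier terms, reading `n` off their number
  obtain ⟨u, hu⟩ := seq_of_forall_finite_exists (P := fun a t => a ∈ s t.ncard ∧ a ∉ t)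
    fun t ht => ((hs _).sdiff ht).nonempty
  have hinj : Injective u := .of_lt_imp_ne fun m n hlt h => (hu n).2 ⟨m, hlt, h⟩
  refine ⟨u, hinj, fun n => ?_⟩
  simpa [ncard_image_of_injective _ hinj] using (hu n).1

theorem Function.Injective.measurableEmbedding_of_countable {α β : Type*} [Countable α]
    [MeasurableSpace α] [MeasurableSingletonClass α] [MeasurableSpace β]
    [MeasurableSingletonClass β] {f : α → β} (hf : Injective f) : MeasurableEmbedding f :=
  ⟨hf, measurable_of_countable f, fun s _ => (s.to_countable.image f).measurableSet⟩

theorem exists_measurable_index_dist_lt {α : Type*} [PseudoMetricSpace α] [SeparableSpace α]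
    [Nonempty α] [MeasurableSpace α] [OpensMeasurableSpace α] {ε : ℝ} (hε : 0 < ε) :
    ∃ (c : ℕ → α) (idx : α → ℕ), Measurable idx ∧ ∀ a, dist a (c (idx a)) < ε := by
  classical
  obtain ⟨c, hc⟩ := exists_dense_seq α
  have hcov : ∀ a, ∃ i, dist a (c i) < ε := fun a => hc.exists_dist_lt a hε
  exact ⟨c, fun a => Nat.find (hcov a),
    measurable_find hcov fun i => measurableSet_lt (measurable_id.dist measurable_const)
      measurable_const, fun a => Nat.find_spec (hcov a)⟩

theorem exists_measurable_encoding {X Z : Type*} [PseudoMetricSpace X] [SeparableSpace X]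
    [Nonempty X] [MeasurableSpace X] [OpensMeasurableSpace X] [MetricSpace Z] [SeparableSpace Z]
    [Nonempty Z] [PerfectSpace Z] [MeasurableSpace Z] [BorelSpace Z] {ε : ℝ} (hε : 0 < ε) :
    ∃ (ζ : X × Z → Z) (φ : Z → X), Measurable ζ ∧ Measurable φ ∧
      ∀ x z, dist (ζ (x, z)) z < ε ∧ dist (φ (ζ (x, z))) x < ε := by
  obtain ⟨cX, i, hi, hcX⟩ := exists_measurable_index_dist_lt (α := X) hε
  obtain ⟨cZ, j, hj, hcZ⟩ := exists_measurable_index_dist_lt (α := Z) (half_pos hε)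
  obtain ⟨w, hw, hwZ⟩ := exists_injective_forall_mem_of_infinite
    fun k => infinite_of_mem_nhds (cZ (Nat.unpair k).1) (ball_mem_nhds _ (half_pos hε))
  refine ⟨fun p => w (Nat.pair (j p.2) (i p.1)),
    extend w (fun k => cX (Nat.unpair k).2) fun _ => cX 0,
    measurable_from_nat.comp ((measurable_of_countable (uncurry Nat.pair)).comp
      ((hj.comp measurable_snd).prodMk (hi.comp measurable_fst))),
    hw.measurableEmbedding_of_countable.measurable_extend measurable_from_nat measurable_const,
    fun x z => ⟨?_, ?_⟩⟩
  · have hw_mem := hwZ (Nat.pair (j z) (i x))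
    rw [Nat.unpair_pair] at hw_mem
    calc dist (w (Nat.pair (j z) (i x))) z
        ≤ dist (w (Nat.pair (j z) (i x))) (cZ (j z)) + dist z (cZ (j z)) :=
          dist_triangle_right _ _ _
      _ < ε / 2 + ε / 2 := add_lt_add (mem_ball.1 hw_mem) (hcZ z)
      _ = ε := add_halves ε
  · rw [hw.extend_apply, Nat.unpair_pair, dist_comm]
    exact hcX x

/-- For Polish spaces `X, Y, Z` with `Z` perfect, the set of probability measures on
`X × Y × Z` under which the first coordinate is conditionally independent of the second
given the third is dense in the weak topology. -/
theorem stmt_12 {X Y Z : Type*}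
    [MetricSpace X] [CompleteSpace X] [TopologicalSpace.SeparableSpace X]
    [MeasurableSpace X] [BorelSpace X]
    [MetricSpace Y] [CompleteSpace Y] [TopologicalSpace.SeparableSpace Y]
    [MeasurableSpace Y] [BorelSpace Y]
    [MetricSpace Z] [CompleteSpace Z] [TopologicalSpace.SeparableSpace Z]
    [MeasurableSpace Z] [BorelSpace Z]
    (hZ : Perfect (Set.univ : Set Z)) :
    Dense {P : ProbabilityMeasure (X × Y × Z) |
      CondIndepFun (MeasurableSpace.comap (fun ω : X × Y × Z => ω.2.2) inferInstance)
        ((measurable_snd.comp measurable_snd).comap_le)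
        (fun ω : X × Y × Z => ω.1) (fun ω : X × Y × Z => ω.2.1)
        (P : Measure (X × Y × Z))} := by
  have : PerfectSpace Z := ⟨hZ.acc⟩
  intro P
  obtain ⟨⟨x₀, -, z₀⟩⟩ := nonempty_of_isProbabilityMeasure (P : Measure (X × Y × Z))
  have : Nonempty X := ⟨x₀⟩
  have : Nonempty Z := ⟨z₀⟩
  choose ζ φ hζ hφ hdist using fun n : ℕ =>
    exists_measurable_encoding (X := X) (Z := Z) (Nat.one_div_pos_of_nat (n := n))
  let T : ℕ → X × Y × Z → X × Y × Z := fun n ω =>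
    (φ n (ζ n (ω.1, ω.2.2)), ω.2.1, ζ n (ω.1, ω.2.2))
  have hZm : Measurable fun ω : X × Y × Z => ω.2.2 := measurable_snd.comp measurable_snd
  have hT : ∀ n, Measurable (T n) := fun n =>
    have hζn : Measurable fun ω : X × Y × Z => ζ n (ω.1, ω.2.2) :=
      (hζ n).comp (measurable_fst.prodMk hZm)
    ((hφ n).comp hζn).prodMk ((measurable_fst.comp measurable_snd).prodMk hζn)
  have hT_dist : ∀ n ω, dist (T n ω) ω < 1 / ((n : ℝ) + 1) := fun n ω =>
    max_lt (hdist n ω.1 ω.2.2).2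
      (max_lt ((dist_self ω.2.1).trans_lt Nat.one_div_pos_of_nat) (hdist n ω.1 ω.2.2).1)
  have hlim : ∀ ω, Tendsto (fun n => T n ω) atTop (𝓝 ω) := fun ω =>
    tendsto_iff_dist_tendsto_zero.2 <| squeeze_zero (fun _ => dist_nonneg)
      (fun n => (hT_dist n ω).le) tendsto_one_div_add_atTop_nhds_zero_nat
  refine mem_closure_of_tendsto (P.tendsto_map_of_tendsto hT hlim) (Eventually.of_forall
    fun n => condIndepFun_of_ae_eq_comp hZm (hφ n) ?_ (measurable_fst.comp measurable_snd))
  exact (ae_map_iff (hT n).aemeasurable (measurableSet_eq_fun measurable_fst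
    ((hφ n).comp hZm))).2 (ae_of_all _ fun _ => rfl)
end
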